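/- arXiv:1604.06454 — 10 statements merged into one kernel-verified Lean document; each statement's English description precedes it below -/
import Mathlib

section
/- If a trigonometric polynomial ψ(x,y) = Σ_{b∈B} c_b e^{2πi b·(x,y)} on ℝ² (B a finite set of frequencies in ℝ²) vanishes at every point of some circle in the plane, then ψ is identically zero. -/
open Complex Real

/-!
For complex `s`, the point `(x₀ + r cos s, y₀ + r sin s)` turns the trigonometric polynomial into
an entire function of `s` vanishing on `ℝ`, hence everywhere. Writing `u = e^{is}`, this says
`∑ d_b exp (μ_b u + ν_b / u) = 0` for all `u ≠ 0`, with `d_b = c_b e^{2πi b·(x₀, y₀)}`,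
`μ_b = πr (b₂ + i b₁)` and `ν_b = πr (i b₁ - b₂)`. Along a ray `u = t w`, `t → ∞`, in a direction
`w` for which the real parts of the `μ_b w` are distinct, the term with the largest real part
dominates, so its coefficient vanishes; by induction every `d_b`, hence every `c_b`, is zero.
-/

open Filter Topology Finset

namespace Complex

theorem eq_zero_of_differentiable_of_forall_ofReal_eq_zero {E : Type*} [NormedAddCommGroup E]
    [NormedSpace ℂ E] [CompleteSpace E] {f : ℂ → E} (hf : Differentiable ℂ f)
    (h : ∀ x : ℝ, f x = 0) : f = 0 := by
  have hreal : Tendsto ((↑) : ℝ → ℂ) (𝓝[≠] 0) (𝓝[≠] 0) :=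
    continuous_ofReal.continuousWithinAt.tendsto_nhdsWithin fun x hx => by simpa using hx
  exact (analyticOnNhd_univ_iff_differentiable.2 hf).eq_of_frequently_eq analyticOnNhd_const
    (hreal.frequently (Frequently.of_forall h))

theorem tendsto_exp_mul_ofReal_atTop_zero {z : ℂ} (hz : z.re < 0) :
    Tendsto (fun t : ℝ => exp (z * t)) atTop (𝓝 0) :=
  tendsto_exp_comap_re_atBot.comp <| tendsto_comap_iff.2 <| by
    simpa [Function.comp_def] using tendsto_id.const_mul_atTop_of_neg hz

theorem exists_exp_mul_I_eq {u : ℂ} (hu : u ≠ 0) : ∃ s : ℂ, exp (s * I) = u :=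
  ⟨-I * log u, by
    rw [show -I * log u * I = log u by linear_combination (-log u) * I_sq, exp_log hu]⟩

end Complex

section ExpSum

variable {ι : Type*} {a d : ι → ℂ} {g : ι → ℝ → ℂ}

theorem eq_zero_of_dominant_of_sum_mul_exp_eventually_eq_zero [DecidableEq ι] {s : Finset ι}
    {m : ι} (hm : m ∉ s) (hdom : ∀ i ∈ s, (a i).re < (a m).re)
    (hg : ∀ i ∈ insert m s, Tendsto (g i) atTop (𝓝 1))
    (h : ∀ᶠ t : ℝ in atTop, ∑ i ∈ insert m s, d i * exp (a i * t) * g i t = 0) : d m = 0 := by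
  have hfactor : ∀ t : ℝ, ∑ i ∈ insert m s, d i * exp (a i * t) * g i t =
      exp (a m * t) * (d m * g m t + ∑ i ∈ s, d i * exp ((a i - a m) * t) * g i t) := by
    intro t
    rw [sum_insert hm, mul_add, mul_sum]
    congr 1
    · ring
    · refine sum_congr rfl fun i _ => ?_
      rw [sub_mul, Complex.exp_sub]
      field_simp
  have hlim : Tendsto (fun t : ℝ => d m * g m t + ∑ i ∈ s, d i * exp ((a i - a m) * t) * g i t)
      atTop (𝓝 (d m * 1 + ∑ i ∈ s, d i * 0 * 1)) := by
    refine ((hg m (mem_insert_self m s)).const_mul _).add (tendsto_finsetSum s fun i hi => ?_)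
    refine ((tendsto_exp_mul_ofReal_atTop_zero ?_).const_mul _).mul (hg i (mem_insert_of_mem hi))
    simpa using hdom i hi
  have hzero : ∀ᶠ t : ℝ in atTop, d m * g m t + ∑ i ∈ s, d i * exp ((a i - a m) * t) * g i t = 0 :=
    h.mono fun t ht => (mul_eq_zero.1 ((hfactor t).symm.trans ht)).resolve_left (exp_ne_zero _)
  simpa using tendsto_nhds_unique hlim (tendsto_const_nhds.congr' (hzero.mono fun _ => Eq.symm))

theorem eq_zero_of_sum_mul_exp_eventually_eq_zero (s : Finset ι)
    (ha : Set.InjOn (fun i => (a i).re) s) (hg : ∀ i ∈ s, Tendsto (g i) atTop (𝓝 1))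
    (h : ∀ᶠ t : ℝ in atTop, ∑ i ∈ s, d i * exp (a i * t) * g i t = 0) : ∀ i ∈ s, d i = 0 := by
  classical
  induction s using Finset.induction_on_max_value (fun i => (a i).re) with
  | empty => simp
  | insert m s hm hmax ih =>
    have hdom : ∀ i ∈ s, (a i).re < (a m).re := fun i hi =>
      (hmax i hi).lt_of_ne fun heq =>
        hm (ha (mem_insert_of_mem hi) (mem_insert_self m s) heq ▸ hi)
    have hdm := eq_zero_of_dominant_of_sum_mul_exp_eventually_eq_zero hm hdom hg h
    have hs := ih (ha.mono (subset_insert m s)) (fun i hi => hg i (mem_insert_of_mem hi))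
      (by simpa [sum_insert hm, hdm] using h)
    intro i hi
    rcases mem_insert.1 hi with rfl | hi
    exacts [hdm, hs i hi]

theorem eq_zero_of_sum_mul_exp_ray_eventually_eq_zero (s : Finset ι) {μ ν : ι → ℂ} (w : ℂ)
    (hμ : Set.InjOn (fun i => (μ i * w).re) s)
    (h : ∀ᶠ t : ℝ in atTop, ∑ i ∈ s, d i * exp (μ i * (t * w) + ν i * (t * w)⁻¹) = 0) :
    ∀ i ∈ s, d i = 0 := by
  have hinv : Tendsto (fun t : ℝ => ((t : ℂ) * w)⁻¹) atTop (𝓝 0) := by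
    simpa [mul_comm] using ((continuous_ofReal.tendsto 0).comp tendsto_inv_atTop_zero).mul_const w⁻¹
  refine eq_zero_of_sum_mul_exp_eventually_eq_zero (g := fun i t => exp (ν i * (t * w)⁻¹)) s hμ
    (fun i _ => by simpa using (hinv.const_mul (ν i)).cexp) (h.mono fun t ht => ?_)
  simpa only [Complex.exp_add, mul_assoc, mul_comm (t : ℂ) w] using ht

end ExpSum

theorem exists_injOn_snd_sub_fst_mul {K : Type*} [Field K] [Infinite K] (B : Finset (K × K)) :
    ∃ q : K, Set.InjOn (fun b : K × K => b.2 - b.1 * q) B := by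
  classical
  obtain ⟨q, hq⟩ := Infinite.exists_notMem_finset
    ((B ×ˢ B).image fun p : (K × K) × (K × K) => (p.1.2 - p.2.2) / (p.1.1 - p.2.1))
  refine ⟨q, fun b hb b' hb' heq => ?_⟩
  simp only at heq
  by_cases h1 : b.1 = b'.1
  · exact Prod.ext h1 (by rw [h1] at heq; linear_combination heq)
  · refine absurd (mem_image.2 ⟨(b, b'), mem_product.2 ⟨hb, hb'⟩, ?_⟩) hq
    rw [div_eq_iff (sub_ne_zero.2 h1)]
    linear_combination heq

theorem two_pi_I_mul_circle (β₁ β₂ x₀ y₀ r s : ℂ) :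
    2 * π * I * (β₁ * (x₀ + r * cos s) + β₂ * (y₀ + r * sin s)) =
      2 * π * I * (β₁ * x₀ + β₂ * y₀) + π * r * (β₂ + β₁ * I) * exp (s * I) +
        π * r * (β₁ * I - β₂) * (exp (s * I))⁻¹ := by
  rw [Complex.cos, Complex.sin, neg_mul, Complex.exp_neg]
  linear_combination (π * r * β₂ * ((exp (s * I))⁻¹ - exp (s * I))) * I_sq

theorem sum_mul_exp_laurent_eq_zero_of_vanishing_on_circle (B : Finset (ℝ × ℝ)) (c : ℝ × ℝ → ℂ)
    (center : ℝ × ℝ) (r : ℝ)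
    (hvanish : ∀ x y : ℝ, (x - center.1) ^ 2 + (y - center.2) ^ 2 = r ^ 2 →
      ∑ b ∈ B, c b * exp (2 * π * I * (b.1 * x + b.2 * y)) = 0)
    {u : ℂ} (hu : u ≠ 0) :
    ∑ b ∈ B, c b * exp (2 * π * I * (b.1 * center.1 + b.2 * center.2)) *
      exp (π * r * (b.2 + b.1 * I) * u + π * r * (b.1 * I - b.2) * u⁻¹) = 0 := by
  have hcircle : ∀ s : ℂ, ∑ b ∈ B, c b * exp (2 * π * I *
      (b.1 * (center.1 + r * cos s) + b.2 * (center.2 + r * sin s))) = 0 := by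
    refine congrFun (eq_zero_of_differentiable_of_forall_ofReal_eq_zero (by fun_prop) fun θ => ?_)
    have hθ := hvanish (center.1 + r * Real.cos θ) (center.2 + r * Real.sin θ)
      (by linear_combination r ^ 2 * Real.sin_sq_add_cos_sq θ)
    push_cast at hθ
    exact hθ
  obtain ⟨s, hs⟩ := exists_exp_mul_I_eq hu
  rw [← hcircle s]
  refine sum_congr rfl fun b _ => ?_
  rw [two_pi_I_mul_circle, hs, add_assoc, Complex.exp_add (2 * π * I * _), mul_assoc]

/-- A trigonometric polynomial on ℝ² vanishing on a circle is identically zero. -/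
theorem trig_poly_vanishing_on_circle_eq_zero
    (B : Finset (ℝ × ℝ)) (c : ℝ × ℝ → ℂ) (center : ℝ × ℝ) (r : ℝ) (hr : 0 < r)
    (hvanish : ∀ x y : ℝ, (x - center.1) ^ 2 + (y - center.2) ^ 2 = r ^ 2 →
      ∑ b ∈ B, c b * Complex.exp (2 * Real.pi * Complex.I * (b.1 * x + b.2 * y)) = 0) :
    ∀ x y : ℝ,
      ∑ b ∈ B, c b * Complex.exp (2 * Real.pi * Complex.I * (b.1 * x + b.2 * y)) = 0 := by
  obtain ⟨q, hq⟩ := exists_injOn_snd_sub_fst_mul B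
  have hre : Set.InjOn (fun b : ℝ × ℝ => (π * r * (b.2 + b.1 * I) * (1 + q * I)).re) B :=
    ((mul_right_injective₀ (by positivity : (π * r : ℝ) ≠ 0)).comp_injOn hq).congr fun b _ => by
      simp only [Function.comp_apply, mul_re, mul_im, add_re, add_im, ofReal_re, ofReal_im, I_re,
        I_im, one_re, one_im]
      ring
  have hcoeff := eq_zero_of_sum_mul_exp_ray_eventually_eq_zero B (1 + q * I) hre <|
    (eventually_gt_atTop 0).mono fun t ht =>
      sum_mul_exp_laurent_eq_zero_of_vanishing_on_circle B c center r hvanish <|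
        mul_ne_zero (ofReal_ne_zero.2 ht.ne') fun h => by simpa using congrArg re h
  intro x y
  refine sum_eq_zero fun b hb => ?_
  rw [(mul_eq_zero.1 (hcoeff b hb)).resolve_right (exp_ne_zero _), zero_mul]
end

section
/- If a trigonometric polynomial on ℝ^d (d > 1) vanishes on some sphere in ℝ^d, then it vanishes identically on ℝ^d. -/
/-!
Choose orthonormal `e, f` such that `b ↦ ⟪b, f⟫` is injective on the frequencies. Restricted to
the great circle `t ↦ center + r cos t • e + r sin t • f` of the sphere, the trigonometric
polynomial extends to an entire function of `t` vanishing on `ℝ`, hence on `ℂ`. At `t = iT` the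
term with frequency `b` has modulus `|c b| exp (-2π r ⟪b, f⟫ sinh T)`; as `T → ∞` the term of
smallest `⟪b, f⟫` dominates all others, so its coefficient vanishes, and induction on the
frequencies kills every coefficient.
-/

open Complex Real Filter Topology Module
open scoped RealInnerProductSpace

section InnerProductSpace

variable {E : Type*} [NormedAddCommGroup E] [InnerProductSpace ℝ E]

theorem exists_forall_inner_ne_zero {W : Finset E} (hW : ∀ w ∈ W, w ≠ 0) :
    ∃ v : E, ∀ w ∈ W, ⟪w, v⟫ ≠ 0 := by
  classical
  have htop : ⊤ ∉ W.image fun w => LinearMap.ker (innerₛₗ ℝ w) := by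
    simp only [Finset.mem_image, LinearMap.ker_eq_top, not_exists, not_and]
    exact fun w hw h0 => hW w hw (by simpa using congrArg (· w) h0)
  obtain ⟨v, hv⟩ :=
    (Set.ne_univ_iff_exists_notMem _).1 (Subspace.biUnion_ne_univ_of_top_notMem htop)
  refine ⟨v, fun w hw h0 => hv ?_⟩
  simp only [Finset.mem_image, Set.iUnion_exists, Set.biUnion_and', Set.iUnion_iUnion_eq_right,
    Set.mem_iUnion]
  exact ⟨w, hw, h0⟩

theorem exists_norm_eq_one_injOn_inner [Nontrivial E] (B : Finset E) :
    ∃ f : E, ‖f‖ = 1 ∧ Set.InjOn (fun b => ⟪b, f⟫) B := by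
  classical
  obtain ⟨w₀, hw₀⟩ := exists_ne (0 : E)
  set W := insert w₀ (((B ×ˢ B).filter fun p => p.1 ≠ p.2).image fun p => p.1 - p.2)
  have hW : ∀ w ∈ W, w ≠ 0 := by
    simp only [W, Finset.mem_insert, Finset.mem_image, Finset.mem_filter, Finset.mem_product]
    rintro w (rfl | ⟨p, ⟨-, hp⟩, rfl⟩)
    exacts [hw₀, sub_ne_zero.2 hp]
  obtain ⟨v, hv⟩ := exists_forall_inner_ne_zero hW
  have hv0 : v ≠ 0 := by
    rintro rfl
    exact hv w₀ (Finset.mem_insert_self _ _) (inner_zero_right _)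
  refine ⟨‖v‖⁻¹ • v, norm_smul_inv_norm hv0, fun b hb b' hb' hbb' => by_contra fun hne => ?_⟩
  refine hv (b - b') (Finset.mem_insert_of_mem (Finset.mem_image.2 ⟨(b, b'), ?_, rfl⟩)) ?_
  · simpa using ⟨⟨hb, hb'⟩, hne⟩
  · simp only [real_inner_smul_right] at hbb'
    rw [inner_sub_left, sub_eq_zero]
    exact mul_left_cancel₀ (inv_ne_zero (norm_ne_zero_iff.2 hv0)) hbb'

theorem exists_norm_eq_one_inner_eq_zero [FiniteDimensional ℝ E] (hE : 1 < finrank ℝ E) (v : E) :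
    ∃ e : E, ‖e‖ = 1 ∧ ⟪e, v⟫ = 0 := by
  have hspan : (ℝ ∙ v) ≠ ⊤ := fun h => by
    have := finrank_span_le_card (R := ℝ) ({v} : Set E)
    rw [h, finrank_top] at this
    simp only [Set.toFinset_singleton, Finset.card_singleton] at this
    omega
  obtain ⟨u, hu, hu0⟩ :=
    Submodule.exists_mem_ne_zero_of_ne_bot (mt Submodule.orthogonal_eq_bot_iff.1 hspan)
  refine ⟨‖u‖⁻¹ • u, norm_smul_inv_norm hu0, ?_⟩
  rw [real_inner_smul_left, Submodule.mem_orthogonal_singleton_iff_inner_left.1 hu, mul_zero]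

theorem dist_add_smul_add_smul_eq {e f : E} (he : ‖e‖ = 1) (hf : ‖f‖ = 1) (hef : ⟪e, f⟫ = 0)
    (x : E) {r : ℝ} (hr : 0 ≤ r) (t : ℝ) :
    dist (x + (r * Real.cos t) • e + (r * Real.sin t) • f) x = r := by
  rw [dist_eq_norm, add_assoc, add_sub_cancel_left, ← sq_eq_sq₀ (norm_nonneg _) hr,
    norm_add_sq_real, norm_smul, norm_smul, real_inner_smul_left, real_inner_smul_right, hef, he,
    hf]
  simp only [Real.norm_eq_abs, mul_pow, sq_abs]
  linear_combination r ^ 2 * Real.sin_sq_add_cos_sq t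

end InnerProductSpace

theorem Differentiable.eq_zero_of_forall_ofReal_eq_zero {E : Type*} [NormedAddCommGroup E]
    [NormedSpace ℂ E] [CompleteSpace E] {g : ℂ → E} (hg : Differentiable ℂ g)
    (h : ∀ t : ℝ, g t = 0) : g = 0 := by
  have hfreq : ∃ᶠ z in 𝓝[≠] (0 : ℂ), g z = 0 :=
    (continuous_ofReal.continuousWithinAt.tendsto_nhdsWithin fun _ _ ↦ by simp_all).frequently
      (Frequently.of_forall (f := 𝓝[≠] (0 : ℝ)) h)
  exact funext fun z =>
    (analyticOnNhd_univ_iff_differentiable.2 hg).eqOn_zero_of_preconnected_of_frequently_eq_zero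
      isPreconnected_univ (Set.mem_univ 0) hfreq (Set.mem_univ z)

theorem Real.tendsto_sinh_atTop : Tendsto Real.sinh atTop atTop :=
  tendsto_atTop_mono' atTop ((eventually_ge_atTop 0).mono fun _ => Real.self_le_sinh_iff.2)
    tendsto_id

section ExponentialSums

variable {ι α : Type*} {l : Filter α} {s : α → ℝ} {β : ι → ℝ} {u : ι → α → ℂ}

theorem tendsto_sum_mul_exp_neg_mul_nhds_zero (hs : Tendsto s l atTop) {S : Finset ι}
    (hβ : ∀ b ∈ S, 0 < β b) (c : ι → ℂ) (hu : ∀ b T, ‖u b T‖ = 1) :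
    Tendsto (fun T => ∑ b ∈ S, c b * u b T * Real.exp (-(β b * s T))) l (𝓝 0) := by
  rw [← Finset.sum_const_zero (s := S)]
  refine tendsto_finsetSum S fun b hb =>
    squeeze_zero_norm (a := fun T => ‖c b‖ * Real.exp (-(β b * s T))) (fun T => ?_) ?_
  · rw [norm_mul, norm_mul, hu, mul_one, Complex.norm_real,
      Real.norm_of_nonneg (Real.exp_pos _).le]
  · simpa using ((Real.tendsto_exp_atBot.comp
      (tendsto_neg_atTop_atBot.comp (hs.const_mul_atTop (hβ b hb)))).const_mul ‖c b‖)

theorem eq_zero_of_sum_mul_exp_neg_mul_eq_zero [l.NeBot] (hs : Tendsto s l atTop) {c : ι → ℂ}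
    (hu : ∀ b T, ‖u b T‖ = 1) (S : Finset ι) (hβ : Set.InjOn β S)
    (h : ∀ᶠ T in l, ∑ b ∈ S, c b * u b T * Real.exp (-(β b * s T)) = 0) :
    ∀ b ∈ S, c b = 0 := by
  classical
  induction S using Finset.induction_on_min_value β with
  | empty => simp
  | insert a S haS hmin ih =>
    have hlt : ∀ b ∈ S, 0 < β b - β a := fun b hb => sub_pos.2 <| (hmin b hb).lt_of_ne fun hab =>
      haS (hβ (Finset.mem_insert_self a S) (Finset.mem_insert_of_mem hb) hab ▸ hb)
    -- divide the relation by `exp (-(β a * s T))`, the largest of the exponentials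
    have hdom : ∀ᶠ T in l, c a * u a T =
        -∑ b ∈ S, c b * u b T * Real.exp (-((β b - β a) * s T)) := by
      filter_upwards [h] with T hT
      rw [Finset.sum_insert haS] at hT
      refine eq_neg_of_add_eq_zero_left <|
        mul_right_cancel₀ (ofReal_ne_zero.2 (Real.exp_pos (-(β a * s T))).ne') ?_
      rw [zero_mul, ← hT, add_mul, Finset.sum_mul]
      congr 1
      refine Finset.sum_congr rfl fun b _ => ?_
      rw [mul_assoc, ← ofReal_mul, ← Real.exp_add]
      ring_nf
    have hca : c a = 0 := by
      have hnorm := (tendsto_sum_mul_exp_neg_mul_nhds_zero hs hlt c hu).neg.norm.congr'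
        (hdom.mono fun T hT => by rw [← hT, norm_mul, hu, mul_one])
      simpa using hnorm
    have hS : ∀ᶠ T in l, ∑ b ∈ S, c b * u b T * Real.exp (-(β b * s T)) = 0 := by
      filter_upwards [h] with T hT
      simpa [Finset.sum_insert haS, hca] using hT
    simpa [hca] using ih (hβ.mono (Finset.coe_subset.2 (Finset.subset_insert a S))) hS

end ExponentialSums

theorem cexp_two_pi_I_mul_cos_sin_mul_I (a p q r T : ℝ) :
    cexp (2 * π * I * (a + r * (p * Complex.cos (T * I) + q * Complex.sin (T * I)))) =
      cexp ((2 * π * (a + r * p * Real.cosh T) : ℝ) * I) *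
        Real.exp (-(q * (2 * π * r * Real.sinh T))) := by
  rw [Complex.cos_mul_I, Complex.sin_mul_I, ← ofReal_cosh, ← ofReal_sinh, ofReal_exp,
    ← Complex.exp_add]
  congr 1
  push_cast
  linear_combination (2 * π * r * q * Complex.sinh T) * I_sq

/-- A trigonometric polynomial on ℝ^d, d > 1, vanishing on a sphere is identically zero. -/
theorem trig_poly_vanishing_on_sphere_eq_zero
    {d : ℕ} (hd : 1 < d)
    (B : Finset (EuclideanSpace ℝ (Fin d))) (c : EuclideanSpace ℝ (Fin d) → ℂ)
    (center : EuclideanSpace ℝ (Fin d)) (r : ℝ) (hr : 0 < r)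
    (hvanish : ∀ x : EuclideanSpace ℝ (Fin d), dist x center = r →
      ∑ b ∈ B, c b * Complex.exp (2 * Real.pi * Complex.I * (⟪b, x⟫ : ℝ)) = 0) :
    ∀ x : EuclideanSpace ℝ (Fin d),
      ∑ b ∈ B, c b * Complex.exp (2 * Real.pi * Complex.I * (⟪b, x⟫ : ℝ)) = 0 := by
  have hdim : 1 < finrank ℝ (EuclideanSpace ℝ (Fin d)) := by rwa [finrank_euclideanSpace_fin]
  have := Module.nontrivial_of_finrank_pos (R := ℝ) (zero_lt_one.trans hdim)
  obtain ⟨f, hf, hinj⟩ := exists_norm_eq_one_injOn_inner B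
  obtain ⟨e, he, hef⟩ := exists_norm_eq_one_inner_eq_zero hdim f
  set g : ℂ → ℂ := fun z => ∑ b ∈ B, c b * cexp (2 * π * I *
    (⟪b, center⟫ + r * (⟪b, e⟫ * Complex.cos z + ⟪b, f⟫ * Complex.sin z)))
  have hg : Differentiable ℂ g := by fun_prop
  have hg_real : ∀ t : ℝ, g t = 0 := fun t => by
    rw [← hvanish _ (dist_add_smul_add_smul_eq he hf hef center hr.le t)]
    refine Finset.sum_congr rfl fun b _ => ?_
    simp only [inner_add_right, real_inner_smul_right, ← ofReal_cos, ← ofReal_sin]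
    push_cast
    ring_nf
  have hg_imag : ∀ T : ℝ, ∑ b ∈ B,
      c b * cexp ((2 * π * (⟪b, center⟫ + r * ⟪b, e⟫ * Real.cosh T) : ℝ) * I) *
        Real.exp (-(⟪b, f⟫ * (2 * π * r * Real.sinh T))) = 0 := fun T => by
    refine .trans (Finset.sum_congr rfl fun b _ => ?_)
      (congrFun (hg.eq_zero_of_forall_ofReal_eq_zero hg_real) (T * I))
    rw [mul_assoc, cexp_two_pi_I_mul_cos_sin_mul_I]
  have hc := eq_zero_of_sum_mul_exp_neg_mul_eq_zero
    (Real.tendsto_sinh_atTop.const_mul_atTop (by positivity)) (fun _ _ => norm_exp_ofReal_mul_I _)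
    B hinj (Eventually.of_forall hg_imag)
  exact fun x => Finset.sum_eq_zero fun b hb => by rw [hc b hb, zero_mul]
end

section
/- Let B ⊆ ℂ be finite with a unique element b₀ of maximal modulus |b₀| > 0, and let c : B → ℂ with c_{b₀} ≠ 0. Then the function f(z) = Σ_{b∈B} c_b e^{πi(bz + b̄/z)} does not vanish identically on ℂ \ {0}; in fact, choosing θ with |θ|=1 and πi b₀ θ = π|b₀|, one has |f(θt)| → ∞ as t → +∞. -/
/-!
Write the term of index `b` at `z = θt` as `g_b(t) · exp(a_b t)` with `a_b = πi b θ` and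
`g_b(t) = c_b exp(πi b̄ / (θt)) → c_b`. Then `Re a_b ≤ π|b| < π|b₀| = Re a_{b₀}` for `b ≠ b₀`, so
after factoring out `exp(a_{b₀} t)` the remaining sum tends to `c_{b₀} ≠ 0`, while
`|exp(a_{b₀} t)| = exp(π|b₀| t) → ∞`.
-/

open Complex Filter
open scoped Topology

theorem tendsto_cexp_mul_ofReal_of_re_neg {a : ℂ} (ha : a.re < 0) :
    Tendsto (fun t : ℝ => exp (a * t)) atTop (𝓝 0) := by
  rw [tendsto_exp_nhds_zero_iff]
  simpa [re_mul_ofReal, mul_comm] using tendsto_id.const_mul_atTop_of_neg ha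

theorem tendsto_inv_mul_ofReal_atTop {θ : ℂ} (hθ : θ ≠ 0) :
    Tendsto (fun t : ℝ => (θ * t)⁻¹) atTop (𝓝 0) :=
  tendsto_inv₀_cobounded.comp <|
    (tendsto_mul_left_cobounded hθ).comp (RCLike.tendsto_ofReal_atTop_cobounded ℂ)

theorem tendsto_mul_cexp_mul_inv_ofReal {θ : ℂ} (hθ : θ ≠ 0) (u w : ℂ) :
    Tendsto (fun t : ℝ => u * exp (w * (θ * t)⁻¹)) atTop (𝓝 u) := by
  have harg := (tendsto_inv_mul_ofReal_atTop hθ).const_mul w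
  rw [mul_zero] at harg
  have h := ((continuous_exp.tendsto 0).comp harg).const_mul u
  rwa [exp_zero, mul_one] at h

section DominantExponential

variable {ι : Type*} {S : Finset ι} {i₀ : ι} {a : ι → ℂ} {g : ι → ℝ → ℂ} {d : ι → ℂ}

theorem tendsto_sum_mul_cexp_sub_dominant (hi₀ : i₀ ∈ S)
    (hdom : ∀ i ∈ S, i ≠ i₀ → (a i).re < (a i₀).re)
    (hg : ∀ i ∈ S, Tendsto (g i) atTop (𝓝 (d i))) :
    Tendsto (fun t : ℝ => ∑ i ∈ S, g i t * exp ((a i - a i₀) * t)) atTop (𝓝 (d i₀)) := by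
  classical
  have hlim : ∑ i ∈ S, (if i = i₀ then d i else 0) = d i₀ := by simp [hi₀]
  rw [← hlim]
  refine tendsto_finsetSum _ fun i hi => ?_
  split_ifs with h
  · subst h
    simpa using hg i hi
  · simpa using (hg i hi).mul
      (tendsto_cexp_mul_ofReal_of_re_neg (by simpa using hdom i hi h))

theorem norm_sum_mul_cexp_eq (t : ℝ) :
    ‖∑ i ∈ S, g i t * exp (a i * t)‖
      = Real.exp ((a i₀).re * t) * ‖∑ i ∈ S, g i t * exp ((a i - a i₀) * t)‖ := by
  have hfactor : ∑ i ∈ S, g i t * exp (a i * t)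
      = exp (a i₀ * t) * ∑ i ∈ S, g i t * exp ((a i - a i₀) * t) := by
    rw [Finset.mul_sum]
    refine Finset.sum_congr rfl fun i _ => ?_
    rw [mul_left_comm, ← exp_add]
    ring_nf
  rw [hfactor, norm_mul, norm_exp, re_mul_ofReal]

theorem tendsto_norm_sum_mul_cexp_atTop (hi₀ : i₀ ∈ S) (hpos : 0 < (a i₀).re)
    (hdom : ∀ i ∈ S, i ≠ i₀ → (a i).re < (a i₀).re)
    (hg : ∀ i ∈ S, Tendsto (g i) atTop (𝓝 (d i))) (hd : d i₀ ≠ 0) :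
    Tendsto (fun t : ℝ => ‖∑ i ∈ S, g i t * exp (a i * t)‖) atTop atTop := by
  refine Tendsto.congr (fun t => (norm_sum_mul_cexp_eq (i₀ := i₀) t).symm) ?_
  exact (Real.tendsto_exp_atTop.comp (tendsto_id.const_mul_atTop hpos)).atTop_mul_pos
    (norm_pos_iff.2 hd) (tendsto_sum_mul_cexp_sub_dominant hi₀ hdom hg).norm

end DominantExponential

/-- If B has a unique element b₀ of maximal (positive) modulus with nonzero coefficient, then
along the ray z = θt with πi b₀ θ = π|b₀|, the function |f(θt)| tends to infinity; in
particular f does not vanish identically on ℂ \ {0}. -/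
theorem exp_sum_dominant_term_blows_up
    (B : Finset ℂ) (c : ℂ → ℂ) (b₀ : ℂ) (hb₀ : b₀ ∈ B) (hb₀pos : 0 < ‖b₀‖)
    (hmax : ∀ b ∈ B, b ≠ b₀ → ‖b‖ < ‖b₀‖)
    (hc : c b₀ ≠ 0)
    (θ : ℂ) (hθ : ‖θ‖ = 1)
    (hθeq : (Real.pi : ℂ) * Complex.I * b₀ * θ = (Real.pi : ℂ) * ‖b₀‖) :
    (¬ ∀ z : ℂ, z ≠ 0 →
        ∑ b ∈ B, c b * Complex.exp (Real.pi * Complex.I * (b * z + (starRingEnd ℂ) b / z)) = 0)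
      ∧ Tendsto (fun t : ℝ => ‖
          (∑ b ∈ B, c b * Complex.exp (Real.pi * Complex.I *
            (b * (θ * t) + (starRingEnd ℂ) b / (θ * t))))‖)
        atTop atTop := by
  have hθ0 : θ ≠ 0 := norm_ne_zero_iff.1 (by simp [hθ])
  have hre_le (b : ℂ) : ((Real.pi : ℂ) * I * b * θ).re ≤ Real.pi * ‖b‖ :=
    (re_le_norm _).trans (by simp [hθ, abs_of_pos Real.pi_pos])
  have hre₀ : ((Real.pi : ℂ) * I * b₀ * θ).re = Real.pi * ‖b₀‖ := by
    rw [hθeq]; norm_cast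
  have hsplit (t : ℝ) (b : ℂ) :
      c b * exp (Real.pi * I * (b * (θ * t) + (starRingEnd ℂ) b / (θ * t)))
        = c b * exp (Real.pi * I * (starRingEnd ℂ) b * (θ * t)⁻¹)
          * exp (Real.pi * I * b * θ * t) := by
    rw [mul_assoc (c b), ← exp_add]
    congr 2
    ring
  have hblow : Tendsto (fun t : ℝ => ‖∑ b ∈ B,
      c b * exp (Real.pi * I * (b * (θ * t) + (starRingEnd ℂ) b / (θ * t)))‖) atTop atTop := by
    simp_rw [hsplit]
    refine tendsto_norm_sum_mul_cexp_atTop (d := c) hb₀ ?_ ?_ ?_ hc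
    · rw [hre₀]
      exact mul_pos Real.pi_pos hb₀pos
    · intro b hb hne
      rw [hre₀]
      exact (hre_le b).trans_lt (mul_lt_mul_of_pos_left (hmax b hb hne) Real.pi_pos)
    · exact fun b _ => tendsto_mul_cexp_mul_inv_ofReal hθ0 _ _
  refine ⟨fun hzero => ?_, hblow⟩
  obtain ⟨t, ht, hnorm⟩ := ((eventually_gt_atTop 0).and (hblow.eventually_gt_atTop 0)).exists
  rw [hzero (θ * t) (mul_ne_zero hθ0 (ofReal_ne_zero.2 ht.ne')), norm_zero] at hnorm
  exact hnorm.false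
end

section
/- Suppose S ⊆ ℝ^d is Lebesgue measurable, B ⊆ ℝ^d is finite, and the indicator function of S satisfies Σ_{b∈B} 1_S(x−b) = 1 for almost every x ∈ ℝ^d. Then the support of the tempered distribution 1_S^ (Fourier transform of 1_S) is contained in {0} ∪ {ξ : Σ_{b∈B} e^{−2πi b·ξ} = 0}. -/
/-!
Near a point `ξ₀ ≠ 0` with `δ_B^(ξ₀) ≠ 0`, a Schwartz function `φ` supported where `δ_B^ ≠ 0` and
away from `0` factors as `φ = δ_B^ • ψ` with `ψ` Schwartz and `ψ 0 = 0`. Modulation turns this into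
`𝓕 φ = Σ_{b ∈ B} 𝓕 ψ (· + b)`, and translating each term and using `Σ_b 1_S (x - b) = 1` gives
`∫ 1_S • 𝓕 φ = ∫ 𝓕 ψ = ψ 0 = 0`.
-/

open Complex MeasureTheory SchwartzMap
open scoped RealInnerProductSpace SchwartzMap FourierTransform Real ContDiff

section Division

variable {𝕜 𝕜' E : Type*} [NontriviallyNormedField 𝕜] [NontriviallyNormedField 𝕜']
  [NormedAlgebra 𝕜 𝕜'] [NormedAddCommGroup E] [NormedSpace 𝕜 E]

theorem contDiff_div_of_ne_zero_on_tsupport {n : WithTop ℕ∞} {f g : E → 𝕜'}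
    (hf : ContDiff 𝕜 n f) (hg : ContDiff 𝕜 n g) (h : ∀ x ∈ tsupport f, g x ≠ 0) :
    ContDiff 𝕜 n (fun x => f x / g x) := by
  refine contDiff_iff_contDiffAt.2 fun x => ?_
  by_cases hx : x ∈ tsupport f
  · simpa only [div_eq_mul_inv] using hf.contDiffAt.mul (hg.contDiffAt.fun_inv (h x hx))
  · refine (contDiffAt_const (c := (0 : 𝕜'))).congr_of_eventuallyEq ?_
    filter_upwards [notMem_tsupport_iff_eventuallyEq.1 hx] with y hy
    simp [hy]

end Division

theorem mul_div_cancel_of_ne_zero_on_tsupport {X K : Type*} [TopologicalSpace X] [Field K]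
    {f g : X → K} (h : ∀ x ∈ tsupport f, g x ≠ 0) (x : X) : g x * (f x / g x) = f x := by
  by_cases hx : x ∈ tsupport f
  · exact mul_div_cancel₀ _ (h x hx)
  · simp [image_eq_zero_of_notMem_tsupport hx]

theorem SchwartzMap.exists_eq_div_of_hasCompactSupport {E : Type*} [NormedAddCommGroup E]
    [NormedSpace ℝ E] {φ : 𝓢(E, ℂ)} {m : E → ℂ} (hm : ContDiff ℝ ∞ m) (hφ : HasCompactSupport φ)
    (hne : ∀ x ∈ tsupport φ, m x ≠ 0) : ∃ ψ : 𝓢(E, ℂ), ∀ x, ψ x = φ x / m x :=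
  ⟨HasCompactSupport.toSchwartzMap (hφ.mono fun _ hx h0 => hx (div_eq_zero_iff.2 (Or.inl h0)))
    (contDiff_div_of_ne_zero_on_tsupport φ.smooth' hm hne), fun _ => rfl⟩

section Tiling

variable {G 𝕜 : Type*} [MeasurableSpace G] [AddGroup G] [MeasurableAdd G] [MeasurableSub G]
  {μ : Measure G} [μ.IsAddRightInvariant] [RCLike 𝕜]

theorem integral_mul_sum_add_eq_integral_of_tiling {f g : G → 𝕜} {B : Finset G} {C : ℝ}
    (hf : Measurable f) (hfC : ∀ x, ‖f x‖ ≤ C) (htile : ∀ᵐ x ∂μ, ∑ b ∈ B, f (x - b) = 1)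
    (hg : Integrable g μ) :
    ∫ x, f x * ∑ b ∈ B, g (x + b) ∂μ = ∫ x, g x ∂μ := by
  have htranslate (b : G) : ∫ x, f x * g (x + b) ∂μ = ∫ x, f (x - b) * g x ∂μ := by
    simpa using integral_add_right_eq_self (μ := μ) (fun y => f (y - b) * g y) b
  calc ∫ x, f x * ∑ b ∈ B, g (x + b) ∂μ = ∑ b ∈ B, ∫ x, f x * g (x + b) ∂μ := by
        simp_rw [Finset.mul_sum]
        exact integral_finsetSum _ fun b _ =>
          (hg.comp_add_right b).bdd_mul hf.aestronglyMeasurable (ae_of_all _ hfC)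
    _ = ∑ b ∈ B, ∫ x, f (x - b) * g x ∂μ := Finset.sum_congr rfl fun b _ => htranslate b
    _ = ∫ x, (∑ b ∈ B, f (x - b)) * g x ∂μ := by
        simp_rw [Finset.sum_mul]
        exact (integral_finsetSum _ fun b _ => hg.bdd_mul
          (hf.comp (measurable_sub_const b)).aestronglyMeasurable
          (ae_of_all _ fun x => hfC _)).symm
    _ = ∫ x, g x ∂μ := integral_congr_ae (htile.mono fun x hx => by simp [hx])

end Tiling

section Fourier

variable {V F : Type*} [NormedAddCommGroup V] [InnerProductSpace ℝ V]
  [NormedAddCommGroup F] [NormedSpace ℂ F]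

/-- `δ_B^`, the Fourier transform of the sum of the point masses at `B`. -/
noncomputable def fourierDelta (B : Finset V) (ξ : V) : ℂ := ∑ b ∈ B, (𝐞 (-⟪ξ, b⟫) : ℂ)

theorem contDiff_fourierDelta (B : Finset V) : ContDiff ℝ ∞ (fourierDelta B) := by
  refine ContDiff.sum fun b _ => ?_
  simp only [Real.fourierChar_apply]
  have hphase : ContDiff ℝ ∞ fun ξ : V => 2 * π * -⟪ξ, b⟫ :=
    contDiff_const.mul (contDiff_id.inner ℝ contDiff_const).neg
  exact contDiff_exp.comp ((ofRealCLM.contDiff.comp hphase).mul contDiff_const)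

theorem fourierDelta_eq_sum_exp (B : Finset V) (ξ : V) :
    fourierDelta B ξ = ∑ b ∈ B, Complex.exp (-(2 * π * I * (⟪b, ξ⟫ : ℝ))) := by
  refine Finset.sum_congr rfl fun b _ => ?_
  rw [Real.fourierChar_apply, real_inner_comm]
  push_cast
  ring_nf

variable [FiniteDimensional ℝ V] [MeasurableSpace V] [BorelSpace V]

theorem Real.fourier_fourierChar_smul (f : V → F) (b w : V) :
    𝓕 (fun v => 𝐞 (-⟪v, b⟫) • f v) w = 𝓕 f (w + b) := by
  simp only [Real.fourier_eq, smul_smul, ← AddChar.map_add_eq_mul, inner_add_right, neg_add]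

theorem SchwartzMap.integral_fourier [CompleteSpace F] (ψ : 𝓢(V, F)) : ∫ x, 𝓕 ψ x = ψ 0 := by
  have hinv : (𝓕⁻ (𝓕 ψ) : 𝓢(V, F)) 0 = ψ 0 := by simp
  rw [← hinv, fourierInv_coe, Real.fourierInv_eq]
  simp only [inner_zero_right, AddChar.map_zero_eq_one, one_smul]

theorem fourier_fourierDelta_smul (B : Finset V) {f : V → F} (hf : Integrable f) (x : V) :
    𝓕 (fun ξ => fourierDelta B ξ • f ξ) x = ∑ b ∈ B, 𝓕 f (x + b) := by
  simp only [← Real.fourier_fourierChar_smul f, Real.fourier_eq, fourierDelta, Finset.sum_smul,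
    Finset.smul_sum, Circle.smul_def]
  rw [integral_finsetSum _ fun b _ => ?_]
  exact (Real.fourierIntegral_convergent_iff x).2 ((Real.fourierIntegral_convergent_iff b).2 hf)

end Fourier

/-- If `1_S * δ_B = 1` a.e., then the distributional Fourier transform of `1_S`
(acting on Schwartz functions by `φ ↦ ∫ 1_S ⬝ 𝓕φ`) is supported in
`{0} ∪ {ξ : Σ_{b∈B} e^{-2πi b·ξ} = 0}`: every point outside this set has an open
neighborhood on which the distribution vanishes. -/
theorem support_fourier_indicator_of_tiling
    {d : ℕ} (S : Set (EuclideanSpace ℝ (Fin d))) (hS : MeasurableSet S)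
    (B : Finset (EuclideanSpace ℝ (Fin d)))
    (htile : ∀ᵐ x : EuclideanSpace ℝ (Fin d),
      ∑ b ∈ B, S.indicator (fun _ => (1 : ℝ)) (x - b) = 1) :
    ∀ ξ : EuclideanSpace ℝ (Fin d), ξ ≠ 0 →
      (∑ b ∈ B, Complex.exp (-(2 * Real.pi * Complex.I * (⟪b, ξ⟫ : ℝ)))) ≠ 0 →
      ∃ U : Set (EuclideanSpace ℝ (Fin d)), IsOpen U ∧ ξ ∈ U ∧
        ∀ φ : 𝓢(EuclideanSpace ℝ (Fin d), ℂ), tsupport φ ⊆ U →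
          ∫ x, S.indicator (fun _ => (1 : ℂ)) x * (fourierTransformCLM ℂ φ) x = 0 := by
  intro ξ₀ hξ₀ hm₀
  rw [← fourierDelta_eq_sum_exp] at hm₀
  refine ⟨{ξ | fourierDelta B ξ ≠ 0} ∩ Metric.ball ξ₀ ‖ξ₀‖,
    (isOpen_ne_fun (contDiff_fourierDelta B).continuous continuous_const).inter Metric.isOpen_ball,
    ⟨hm₀, Metric.mem_ball_self (norm_pos_iff.2 hξ₀)⟩, fun φ hφU => ?_⟩
  have hm : ∀ ξ ∈ tsupport φ, fourierDelta B ξ ≠ 0 := fun ξ hξ => (hφU hξ).1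
  have hφ_cpt : HasCompactSupport φ := Metric.isCompact_of_isClosed_isBounded
    (isClosed_tsupport φ) (Metric.isBounded_ball.subset fun ξ hξ => (hφU hξ).2)
  obtain ⟨ψ, hψ⟩ :=
    SchwartzMap.exists_eq_div_of_hasCompactSupport (contDiff_fourierDelta B) hφ_cpt hm
  have hφψ : ⇑φ = fun ξ => fourierDelta B ξ • ψ ξ := funext fun ξ => by
    rw [hψ, smul_eq_mul, mul_div_cancel_of_ne_zero_on_tsupport hm]
  have hψ0 : ψ 0 = 0 := by
    have h0 : (0 : EuclideanSpace ℝ (Fin d)) ∉ tsupport φ := fun hmem => by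
      simpa using (hφU hmem).2
    rw [hψ, image_eq_zero_of_notMem_tsupport h0, zero_div]
  have htile' : ∀ᵐ x, ∑ b ∈ B, S.indicator (fun _ => (1 : ℂ)) (x - b) = 1 := by
    filter_upwards [htile] with x hx
    simpa [map_indicator ofRealHom, Function.comp_def] using congrArg ofRealHom hx
  calc ∫ x, S.indicator (fun _ => (1 : ℂ)) x * (fourierTransformCLM ℂ φ) x
      = ∫ x, S.indicator (fun _ => (1 : ℂ)) x * ∑ b ∈ B, 𝓕 ψ (x + b) := by
        simp only [fourierTransformCLM_apply, fourier_coe, hφψ,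
          fourier_fourierDelta_smul B ψ.integrable]
    _ = ∫ x, 𝓕 ψ x := integral_mul_sum_add_eq_integral_of_tiling (measurable_const.indicator hS)
        (fun x => (norm_indicator_le_norm_self _ x).trans norm_one.le) htile' (𝓕 ψ).integrable
    _ = ψ 0 := SchwartzMap.integral_fourier ψ
    _ = 0 := hψ0
end

section
/- Suppose S ⊆ ℝ² is Lebesgue measurable and for every ρ ∈ O(2), Σ_{n∈ℤ} 1_S(x − ρ(n,0)) = 1 for almost all x ∈ ℝ². Then for every ρ ∈ O(2), for almost every line L parallel to ρ(ℝ×{0}), the one-dimensional Lebesgue measure of S ∩ L equals 1. -/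
/-!
In the coordinates `(t, s) ↦ ρ (s • e₀ + t • e₁)`, which preserve Lebesgue measure, Fubini turns
the tiling identity into the statement that for almost every `t` the section
`A = {s | ρ (s • e₀ + t • e₁) ∈ S}` tiles `ℝ` by its integer translates, up to a null set.
Unfolding `volume A` over the fundamental domain `(0, 1]` of `ℤ` and summing the tiling identity
there gives `volume A = volume (0, 1] = 1`.
-/

open MeasureTheory
open scoped ENNReal

local notation "e₀" => EuclideanSpace.single (0 : Fin 2) (1 : ℝ)
local notation "e₁" => EuclideanSpace.single (1 : Fin 2) (1 : ℝ)

theorem MeasureTheory.IsAddFundamentalDomain.measure_eq_of_ae_tsum_indicator_vadd_eq_one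
    {G α : Type*} [AddGroup G] [Countable G] [AddAction G α] [MeasurableSpace α]
    [MeasurableConstVAdd G α] {μ : Measure α} [VAddInvariantMeasure G α μ] {s A : Set α}
    (hs : IsAddFundamentalDomain G s μ) (hA : MeasurableSet A)
    (htile : ∀ᵐ x ∂μ, ∑' g : G, A.indicator (fun _ => (1 : ℝ≥0∞)) (g +ᵥ x) = 1) :
    μ A = μ s :=
  calc μ A = ∫⁻ x, A.indicator (fun _ => 1) x ∂μ := (lintegral_indicator_one hA).symm
    _ = ∑' g : G, ∫⁻ x in s, A.indicator (fun _ => 1) (g +ᵥ x) ∂μ := hs.lintegral_eq_tsum'' _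
    _ = ∫⁻ x in s, ∑' g : G, A.indicator (fun _ => 1) (g +ᵥ x) ∂μ :=
      (lintegral_tsum fun g =>
        ((measurable_const.indicator hA).comp (measurable_const_vadd g)).aemeasurable).symm
    _ = ∫⁻ _ in s, 1 ∂μ := lintegral_congr_ae (ae_restrict_of_ae htile)
    _ = μ s := setLIntegral_one s

theorem Real.volume_eq_of_ae_tsum_indicator_add_zsmul_eq_one {T : ℝ} (hT : 0 < T) {A : Set ℝ}
    (hA : MeasurableSet A)
    (htile : ∀ᵐ x, ∑' n : ℤ, A.indicator (fun _ => (1 : ℝ≥0∞)) (x + n • T) = 1) :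
    volume A = ENNReal.ofReal T := by
  let e : ℤ ≃ AddSubgroup.zmultiples T := Equiv.ofBijective (fun n => ⟨n • T, n, rfl⟩)
    ⟨fun _ _ h => (zsmul_left_strictMono hT).injective (congrArg Subtype.val h),
      fun ⟨_, n, hn⟩ => ⟨n, Subtype.ext hn⟩⟩
  rw [(isAddFundamentalDomain_Ioc hT 0 volume).measure_eq_of_ae_tsum_indicator_vadd_eq_one hA,
    zero_add, Real.volume_Ioc, sub_zero]
  filter_upwards [htile] with x hx
  rw [← e.tsum_eq]
  simpa [e, add_comm] using hx

theorem ENNReal.tsum_indicator_one_eq_one_of_real {ι α : Type*} {A : Set α} {f : ι → α}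
    (h : ∑' i, A.indicator (fun _ => (1 : ℝ)) (f i) = 1) :
    ∑' i, A.indicator (fun _ => (1 : ℝ≥0∞)) (f i) = 1 := by
  have hsum : Summable fun i => A.indicator (fun _ => (1 : ℝ)) (f i) := by
    by_contra hns
    rw [tsum_eq_zero_of_not_summable hns] at h
    exact zero_ne_one h
  calc ∑' i, A.indicator (fun _ => (1 : ℝ≥0∞)) (f i)
      = ∑' i, ENNReal.ofReal (A.indicator (fun _ => (1 : ℝ)) (f i)) :=
        tsum_congr fun i => by by_cases hi : f i ∈ A <;> simp [hi]
    _ = ENNReal.ofReal (∑' i, A.indicator (fun _ => (1 : ℝ)) (f i)) :=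
        (ENNReal.ofReal_tsum_of_nonneg (fun _ => Set.indicator_nonneg (fun _ _ => zero_le_one) _)
          hsum).symm
    _ = 1 := by rw [h, ENNReal.ofReal_one]

theorem EuclideanSpace.measurePreserving_snd_smul_single_zero_add_fst_smul_single_one :
    MeasurePreserving (fun p : ℝ × ℝ => p.2 • e₀ + p.1 • e₁) := by
  have hcoords : (fun p : ℝ × ℝ => p.2 • e₀ + p.1 • e₁) =
      MeasurableEquiv.toLp 2 (Fin 2 → ℝ) ∘ MeasurableEquiv.finTwoArrow.symm ∘ Prod.swap := by
    funext p
    ext i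
    fin_cases i <;> simp [MeasurableEquiv.finTwoArrow]
  rw [hcoords]
  exact (EuclideanSpace.volume_preserving_symm_measurableEquiv_toLp (Fin 2)).symm.comp <|
    (volume_preserving_finTwoArrow ℝ).symm.comp Measure.measurePreserving_swap

theorem ae_ae_tsum_indicator_line_add_int {S : Set (EuclideanSpace ℝ (Fin 2))}
    (ρ : EuclideanSpace ℝ (Fin 2) ≃ₗᵢ[ℝ] EuclideanSpace ℝ (Fin 2))
    (htile : ∀ᵐ x : EuclideanSpace ℝ (Fin 2),
      ∑' n : ℤ, S.indicator (fun _ => (1 : ℝ≥0∞)) (x - ρ ((n : ℝ) • e₀)) = 1) :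
    ∀ᵐ t : ℝ, ∀ᵐ s : ℝ,
      ∑' n : ℤ, {s : ℝ | ρ (s • e₀ + t • e₁) ∈ S}.indicator (fun _ => (1 : ℝ≥0∞)) (s + n) = 1 := by
  have hprod := (ρ.measurePreserving.comp
    EuclideanSpace.measurePreserving_snd_smul_single_zero_add_fst_smul_single_one
      ).quasiMeasurePreserving.ae htile
  rw [Measure.volume_eq_prod] at hprod
  filter_upwards [Measure.ae_ae_of_ae_prod hprod] with t ht
  filter_upwards [ht] with s hs
  rw [← (Equiv.neg ℤ).tsum_eq]
  refine (tsum_congr fun n => ?_).trans hs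
  simp only [Function.comp_apply, ← ρ.map_sub, Equiv.neg_apply, Int.cast_neg, ← sub_eq_add_neg]
  have hline : (s - n) • e₀ + t • e₁ = s • e₀ + t • e₁ - (n : ℝ) • e₀ := by module
  rw [← hline]
  exact Set.indicator_comp_right (g := fun _ => (1 : ℝ≥0∞)) fun u : ℝ => ρ (u • e₀ + t • e₁)

/-- If a measurable `S ⊆ ℝ²` tiles the plane (a.e.) by translates along every rotated copy of
`ℤ × {0}`, then for every rotation `ρ` and almost every line parallel to `ρ(ℝ × {0})`,
the one-dimensional measure of `S` on that line equals `1`. -/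
theorem steinhaus_for_Z_implies_lines_measure_one
    (S : Set (EuclideanSpace ℝ (Fin 2))) (hS : MeasurableSet S)
    (htile : ∀ ρ : EuclideanSpace ℝ (Fin 2) ≃ₗᵢ[ℝ] EuclideanSpace ℝ (Fin 2),
      ∀ᵐ x : EuclideanSpace ℝ (Fin 2),
        ∑' n : ℤ, S.indicator (fun _ => (1 : ℝ))
          (x - ρ ((n : ℝ) • EuclideanSpace.single (0 : Fin 2) (1 : ℝ))) = 1) :
    ∀ ρ : EuclideanSpace ℝ (Fin 2) ≃ₗᵢ[ℝ] EuclideanSpace ℝ (Fin 2),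
      ∀ᵐ t : ℝ, volume {s : ℝ |
        ρ (s • EuclideanSpace.single (0 : Fin 2) (1 : ℝ)
          + t • EuclideanSpace.single (1 : Fin 2) (1 : ℝ)) ∈ S} = 1 := by
  intro ρ
  have htile_ennreal : ∀ᵐ x : EuclideanSpace ℝ (Fin 2),
      ∑' n : ℤ, S.indicator (fun _ => (1 : ℝ≥0∞)) (x - ρ ((n : ℝ) • e₀)) = 1 := by
    filter_upwards [htile ρ] with x hx using ENNReal.tsum_indicator_one_eq_one_of_real hx
  filter_upwards [ae_ae_tsum_indicator_line_add_int ρ htile_ennreal] with t ht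
  have hA : MeasurableSet {s : ℝ | ρ (s • e₀ + t • e₁) ∈ S} :=
    (by fun_prop : Continuous fun s : ℝ => ρ (s • e₀ + t • e₁)).measurable hS
  simpa using Real.volume_eq_of_ae_tsum_indicator_add_zsmul_eq_one one_pos hA (by simpa using ht)
end

section
/- Let E ⊆ ℝ × (0,π) be a Lebesgue null set, viewed as a set of lines in ℝ² not parallel to the x-axis parametrized by (x, θ) where x is the intersection with the x-axis and θ the angle with the x-axis. Then for almost every point (x₀,y₀) ∈ ℝ², the set of angles θ ∈ (0,π) such that the line through (x₀,y₀) with angle θ lies in E has measure zero. -/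
/-! For a fixed height `y`, the map `(x, θ) ↦ (x - y cot θ, θ)` is a fibrewise translation of
`ℝ × ℝ`, hence preserves Lebesgue measure, so it pulls the null set `E` back to a null set.
Tonelli over `y` makes the set of triples `(x, y, θ)` whose line lies in `E` null in `ℝ³`, and
Fubini in the other order gives null `θ`-sections for almost every point `(x, y)`. -/

open MeasureTheory Real

section Shear

variable {G α β : Type*} [MeasurableSpace G] [AddGroup G] [MeasurableAdd₂ G]
  [MeasurableSpace α] [MeasurableSpace β]
  {μG : Measure G} [μG.IsAddRightInvariant] [SFinite μG] {μ : Measure α} [SFinite μ]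

theorem measurePreserving_prod_shear {f : α → G} (hf : Measurable f) :
    MeasurePreserving (fun q : G × α => (q.1 + f q.2, q.2)) (μG.prod μ) (μG.prod μ) := by
  have hskew : MeasurePreserving (fun q : α × G => (q.1, q.2 + f q.1)) (μ.prod μG) (μ.prod μG) :=
    (MeasurePreserving.id μ).skew_product (by fun_prop)
      (.of_forall fun a => map_add_right_eq_self μG (f a))
  exact (Measure.measurePreserving_swap.comp hskew).comp Measure.measurePreserving_swap

theorem ae_measure_setOf_shear_mem_eq_zero {ν : Measure β} [SFinite ν] {E : Set (G × α)}
    (hE : μG.prod μ E = 0) {g : β × α → G} (hg : Measurable g) :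
    ∀ᵐ p ∂μG.prod ν, μ {a | (p.1 + g (p.2, a), a) ∈ E} = 0 := by
  set E' := toMeasurable (μG.prod μ) E
  have hE' : MeasurableSet E' := measurableSet_toMeasurable _ _
  let T : Set (β × (G × α)) := {q | (q.2.1 + g (q.1, q.2.2), q.2.2) ∈ E'}
  have hT : MeasurableSet T := hE'.preimage (by fun_prop)
  have hT0 : ν.prod (μG.prod μ) T = 0 := by
    refine (Measure.measure_prod_null hT).2 (.of_forall fun b => ?_)
    show μG.prod μ (Prod.mk b ⁻¹' T) = 0
    rw [← hE, ← measure_toMeasurable E,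
      ← (measurePreserving_prod_shear (hg.comp measurable_prodMk_left)).measure_preimage
        hE'.nullMeasurableSet]
    rfl
  have hrearrange : MeasurePreserving (fun q : (G × β) × α => (q.1.2, (q.1.1, q.2)))
      ((μG.prod ν).prod μ) (ν.prod (μG.prod μ)) :=
    (measurePreserving_prodAssoc ν μG μ).comp
      (Measure.measurePreserving_swap.prod (MeasurePreserving.id μ))
  have hS : (μG.prod ν).prod μ _ = 0 :=
    (hrearrange.measure_preimage hT.nullMeasurableSet).trans hT0
  filter_upwards [Measure.measure_ae_null_of_prod_null hS] with p (hp : μ _ = 0)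
  exact measure_mono_null (fun a ha => subset_toMeasurable (μG.prod μ) E ha) hp

end Shear

theorem null_set_of_lines_through_ae_point_general
    (E : Set (ℝ × ℝ)) (hE0 : volume E = 0) :
    ∀ᵐ p : ℝ × ℝ, volume {θ : ℝ | θ ∈ Set.Ioo 0 π ∧
      (p.1 - p.2 * (Real.cos θ / Real.sin θ), θ) ∈ E} = 0 := by
  have hcot : Measurable fun q : ℝ × ℝ => -(q.1 * (Real.cos q.2 / Real.sin q.2)) := by fun_prop
  filter_upwards [ae_measure_setOf_shear_mem_eq_zero (μG := volume) (ν := volume) hE0 hcot]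
    with p hp
  refine measure_mono_null (fun θ hθ => ?_) hp
  simpa [sub_eq_add_neg] using hθ.2

/-- If a set of lines `E ⊆ ℝ × (0,π)` (parametrized by intersection with the x-axis and angle)
is null, then for almost every point of the plane, the set of angles `θ ∈ (0,π)` for which the
line through that point at angle `θ` belongs to `E` is null. -/
theorem null_set_of_lines_through_ae_point
    (E : Set (ℝ × ℝ)) (hE : E ⊆ Set.univ ×ˢ Set.Ioo 0 π) (hE0 : volume E = 0) :
    ∀ᵐ p : ℝ × ℝ, volume {θ : ℝ | θ ∈ Set.Ioo 0 π ∧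
      (p.1 - p.2 * (Real.cos θ / Real.sin θ), θ) ∈ E} = 0 :=
  null_set_of_lines_through_ae_point_general E hE0
end

section
/- For any null set E ⊆ ℝ × (0,π), any R > 0, and the map φ : ℝ²×(0,π) → ℝ×(0,π), φ(x₀,y₀,θ) = (x₀ − y₀ cot θ, θ), the set φ⁻¹(E) ∩ ([−R,R]²×(0,π)) has Lebesgue measure zero. -/
open MeasureTheory Real

/-!
The map `(x₀, y₀, θ) ↦ (x₀ - y₀ cot θ, θ)` factors as the shear `(x₀, q) ↦ (x₀ - y₀ cot θ, q)`
with `q = (y₀, θ)`, which preserves Lebesgue measure because each of its fibres `x₀ ↦ x₀ - c` is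
a translation, followed by the projection forgetting `y₀`, under which preimages of null sets are
null by Fubini. Hence preimages of null sets under the whole map are null.
-/

section Shear

variable {G β γ : Type*} [MeasurableSpace G] [AddGroup G] [MeasurableAdd G] [MeasurableSub₂ G]
  [MeasurableSpace β] [MeasurableSpace γ]
  {μ : Measure G} [μ.IsAddRightInvariant] [SFinite μ] {ν : Measure β} [SFinite ν]
  {g : β → G}

theorem measurePreserving_sub_comp_prod (hg : Measurable g) :
    MeasurePreserving (fun p : G × β => (p.1 - g p.2, p.2)) (μ.prod ν) (μ.prod ν) :=
  have skew : MeasurePreserving (fun p : β × G => (p.1, p.2 - g p.1)) (ν.prod μ) (ν.prod μ) :=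
    (MeasurePreserving.id ν).skew_product (g := fun b x => x - g b)
      (measurable_snd.sub (hg.comp measurable_fst))
      (ae_of_all _ fun b => (measurePreserving_sub_right μ (g b)).map_eq)
  Measure.measurePreserving_swap.comp (skew.comp Measure.measurePreserving_swap)

theorem quasiMeasurePreserving_sub_comp_prodMap {ρ : Measure γ} [SFinite ρ] {h : β → γ}
    (hg : Measurable g) (hh : Measure.QuasiMeasurePreserving h ν ρ) :
    Measure.QuasiMeasurePreserving (fun p : G × β => (p.1 - g p.2, h p.2))
      (μ.prod ν) (μ.prod ρ) :=
  (QuasiMeasurePreserving.prodMap (Measure.QuasiMeasurePreserving.id μ) hh).comp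
    (measurePreserving_sub_comp_prod hg).quasiMeasurePreserving

end Shear

theorem preimage_of_null_line_set_is_null_general
    (E : Set (ℝ × ℝ)) (hE0 : volume E = 0) (R : ℝ) :
    volume {p : ℝ × ℝ × ℝ |
      p.1 ∈ Set.Icc (-R) R ∧ p.2.1 ∈ Set.Icc (-R) R ∧ p.2.2 ∈ Set.Ioo 0 π ∧
      (p.1 - p.2.1 * (Real.cos p.2.2 / Real.sin p.2.2), p.2.2) ∈ E} = 0 := by
  have hcot : Measurable fun q : ℝ × ℝ => q.1 * (Real.cos q.2 / Real.sin q.2) := by fun_prop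
  have hφ := quasiMeasurePreserving_sub_comp_prodMap (μ := (volume : Measure ℝ)) hcot
    (Measure.quasiMeasurePreserving_snd (μ := (volume : Measure ℝ)) (ν := volume))
  exact measure_mono_null (fun p hp => hp.2.2.2) (hφ.preimage_null hE0)

/-- For any null set `E ⊆ ℝ × (0,π)` and any `R > 0`, the preimage of `E` under
`φ(x₀,y₀,θ) = (x₀ − y₀ cot θ, θ)`, intersected with `[−R,R]² × (0,π)`, is null. -/
theorem preimage_of_null_line_set_is_null
    (E : Set (ℝ × ℝ)) (hE : E ⊆ Set.univ ×ˢ Set.Ioo 0 π) (hE0 : volume E = 0)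
    (R : ℝ) (hR : 0 < R) :
    volume {p : ℝ × ℝ × ℝ |
      p.1 ∈ Set.Icc (-R) R ∧ p.2.1 ∈ Set.Icc (-R) R ∧ p.2.2 ∈ Set.Ioo 0 π ∧
      (p.1 - p.2.1 * (Real.cos p.2.2 / Real.sin p.2.2), p.2.2) ∈ E} = 0 :=
  preimage_of_null_line_set_is_null_general E hE0 R
end

section
/- There is no Lebesgue measurable set S ⊆ ℝ² and constants 0 < m ≤ M < ∞ such that for almost every point p ∈ ℝ², for almost every θ ∈ (0,π), the one-dimensional measure of S intersected with the line through p at angle θ lies in [m, M]. -/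
/-!
Put `u z = ∫_{w ∈ S} |w - z|⁻¹ dw`. Polar coordinates centred at `z`, where the half-lines at
angles `θ` and `θ - π` make up one line, give `u z = ∫_{0}^{π} |S ∩ ℓ(z, θ)| dθ`; so the hypothesis
puts `u` between `m π` and `M π` almost everywhere. That is impossible. As `u z₀ < ∞`, the part of
`u z₀` coming from outside a large ball `B(z₀, R)` is small, so for `z ∈ B(z₀, R')` (`R' ≥ R`) the
bound `u z ≥ m π` must mostly come from `S ∩ B(z₀, 2R')`; integrating over `z ∈ B(z₀, R')` gives
`|S ∩ B(z₀, 2R')| ≳ m R'`. But `|S ∩ B(z₀, R)| ≤ R u z₀`, and the part of `S` in `B(z₀, 2R')`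
outside `B(z₀, R)` has measure at most `2R'` times the small tail: incompatible for `R' ≫ R`.
-/

open MeasureTheory Real Set Filter Topology Metric
open scoped ENNReal

theorem lintegral_eq_lintegral_Ioi_add_comp_neg {g : ℝ → ℝ≥0∞} (hg : Measurable g) :
    ∫⁻ r, g r = ∫⁻ r in Ioi 0, (g r + g (-r)) := by
  have hneg : ∫⁻ r in Ioi 0, g (-r) = ∫⁻ r in Iio 0, g r := by
    simpa using
      (Measure.measurePreserving_neg (volume : Measure ℝ)).setLIntegral_comp_preimage_emb
        (MeasurableEquiv.neg ℝ).measurableEmbedding g (Iio 0)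
  rw [lintegral_add_left hg, hneg, setLIntegral_congr Ioi_ae_eq_Ici, add_comm,
    ← lintegral_union measurableSet_Ici (Iio_disjoint_Ici le_rfl), Iio_union_Ici,
    setLIntegral_univ]

theorem lintegral_Ioo_neg_eq_lintegral_Ioo_add_comp_sub {h : ℝ → ℝ≥0∞} (hh : Measurable h)
    {c : ℝ} (hc : 0 < c) :
    ∫⁻ θ in Ioo (-c) c, h θ = ∫⁻ θ in Ioo 0 c, (h θ + h (θ - c)) := by
  have hshift : ∫⁻ θ in Ioo 0 c, h (θ - c) = ∫⁻ θ in Ioc (-c) 0, h θ := by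
    rw [setLIntegral_congr Ioo_ae_eq_Ioc]
    simpa using
      (measurePreserving_sub_right (volume : Measure ℝ) c).setLIntegral_comp_preimage_emb
        (MeasurableEquiv.subRight c).measurableEmbedding h (Ioc (-c) 0)
  rw [lintegral_add_left hh, hshift, add_comm,
    ← lintegral_union measurableSet_Ioo (Ioc_disjoint_Ioi_same.mono_right Ioo_subset_Ioi_self),
    Ioc_union_Ioo_eq_Ioo (by linarith) hc]

open Complex in
theorem setLIntegral_inv_edist_eq_lintegral_volume_lines {S : Set ℂ} (hS : MeasurableSet S)
    (z : ℂ) :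
    ∫⁻ w in S, (edist w z)⁻¹ =
      ∫⁻ θ in Ioo 0 π, volume {r : ℝ | z + r * exp (θ * I) ∈ S} := by
  set G : ℝ × ℝ → ℝ≥0∞ := fun p ↦ S.indicator 1 (z + p.1 * exp (p.2 * I))
  have hG : Measurable G := (measurable_one.indicator hS).comp (by fun_prop)
  have hG_flip (r θ : ℝ) : G (r, θ - π) = G (-r, θ) := by
    simp only [G, ofReal_sub, sub_mul, Complex.exp_sub, exp_pi_mul_I, div_neg, div_one,
      ofReal_neg, neg_mul, mul_neg]
  have hpolar : ∫⁻ w in S, (edist w z)⁻¹ = ∫⁻ p in polarCoord.target, G p := by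
    rw [← lintegral_indicator hS, ← lintegral_add_left_eq_self _ z,
      ← Complex.lintegral_comp_polarCoord_symm]
    refine setLIntegral_congr_fun polarCoord.open_target.measurableSet fun p hp ↦ ?_
    have hr : 0 < p.1 := hp.1
    rw [Complex.polarCoord_symm_apply, ofReal_cos, ofReal_sin, ← exp_mul_I]
    have hdist : edist (z + p.1 * exp (p.2 * I)) z = ENNReal.ofReal p.1 := by
      rw [edist_dist, dist_self_add_left, norm_mul, norm_exp_ofReal_mul_I, mul_one, norm_real,
        Real.norm_of_nonneg hr.le]
    by_cases hmem : z + p.1 * exp (p.2 * I) ∈ S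
    · simp [G, hmem, hdist, ENNReal.mul_inv_cancel, hr]
    · simp [G, hmem]
  have hfib : Measurable fun θ ↦ ∫⁻ r in Ioi 0, G (r, θ) :=
    (hG.comp measurable_swap).lintegral_prod_right'
  rw [hpolar, polarCoord_target, Measure.volume_eq_prod, ← Measure.prod_restrict,
    lintegral_prod_symm _ hG.aemeasurable,
    lintegral_Ioo_neg_eq_lintegral_Ioo_add_comp_sub hfib pi_pos]
  refine setLIntegral_congr_fun measurableSet_Ioo fun θ _ ↦ ?_
  have hGθ : Measurable fun r ↦ G (r, θ) := hG.comp measurable_prodMk_right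
  simp only [hG_flip]
  rw [← lintegral_add_left hGθ, ← lintegral_eq_lintegral_Ioi_add_comp_neg hGθ]
  exact lintegral_indicator_one (hS.preimage (by fun_prop))

section PseudoMetric

variable {X : Type*} [PseudoMetricSpace X]

theorem inv_edist_le_two_mul_inv_edist {w z z₀ : X} {R : ℝ} (hz : dist z z₀ < R)
    (hw : 2 * R < dist w z₀) : (edist w z)⁻¹ ≤ 2 * (edist w z₀)⁻¹ := by
  have hdist : dist w z₀ ≤ 2 * dist w z := by linarith [dist_triangle w z z₀]
  calc (edist w z)⁻¹ ≤ (edist w z₀ / 2)⁻¹ := by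
        refine ENNReal.inv_le_inv.2 (ENNReal.div_le_of_le_mul' ?_)
        rw [edist_dist, edist_dist, ← ENNReal.ofReal_ofNat 2, ← ENNReal.ofReal_mul zero_le_two]
        exact ENNReal.ofReal_le_ofReal hdist
    _ = 2 * (edist w z₀)⁻¹ := by
        rw [ENNReal.inv_div (.inl ENNReal.ofNat_ne_top) (.inl two_ne_zero), div_eq_mul_inv]

variable [MeasurableSpace X] [OpensMeasurableSpace X]

theorem measure_closedBall_le_mul_lintegral_inv_edist (μ : Measure X) (z : X) {ρ : ℝ}
    (hρ : 0 < ρ) : μ (closedBall z ρ) ≤ ENNReal.ofReal ρ * ∫⁻ w, (edist w z)⁻¹ ∂μ := by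
  rw [← lintegral_const_mul' _ _ ENNReal.ofReal_ne_top,
    ← lintegral_indicator_one measurableSet_closedBall]
  refine lintegral_mono fun w ↦ ?_
  by_cases hw : w ∈ closedBall z ρ
  · rw [indicator_of_mem hw, Pi.one_apply, ← div_eq_mul_inv,
      ENNReal.le_div_iff_mul_le (.inr (by simpa)) (.inr ENNReal.ofReal_ne_top), one_mul,
      edist_dist]
    exact ENNReal.ofReal_le_ofReal hw
  · simp [hw]

theorem measure_closedBall_le_add_mul_setLIntegral_compl (μ : Measure X) (z : X) {R ρ : ℝ}
    (hR : 0 < R) (hρ : 0 < ρ) :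
    μ (closedBall z ρ) ≤ ENNReal.ofReal R * ∫⁻ w, (edist w z)⁻¹ ∂μ +
      ENNReal.ofReal ρ * ∫⁻ w in (closedBall z R)ᶜ, (edist w z)⁻¹ ∂μ := by
  calc μ (closedBall z ρ)
      ≤ μ (closedBall z ρ ∩ closedBall z R) + μ (closedBall z ρ \ closedBall z R) :=
        measure_le_inter_add_sdiff _ _ _
    _ ≤ μ (closedBall z R) + μ.restrict (closedBall z R)ᶜ (closedBall z ρ) := by
        rw [Measure.restrict_apply measurableSet_closedBall, sdiff_eq]
        gcongr
        exact inter_subset_right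
    _ ≤ _ := add_le_add (measure_closedBall_le_mul_lintegral_inv_edist μ z hR)
        (measure_closedBall_le_mul_lintegral_inv_edist _ z hρ)

theorem setLIntegral_compl_closedBall_inv_edist_le (μ : Measure X) {z z₀ : X} {R : ℝ}
    (hz : dist z z₀ < R) :
    ∫⁻ w in (closedBall z₀ (2 * R))ᶜ, (edist w z)⁻¹ ∂μ ≤
      2 * ∫⁻ w in (closedBall z₀ (2 * R))ᶜ, (edist w z₀)⁻¹ ∂μ := by
  rw [← lintegral_const_mul' _ _ ENNReal.ofNat_ne_top]
  exact setLIntegral_mono' measurableSet_closedBall.compl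
    fun w hw ↦ inv_edist_le_two_mul_inv_edist hz (lt_of_not_ge hw)

theorem tendsto_setLIntegral_compl_closedBall (μ : Measure X) {f : X → ℝ≥0∞}
    (hf : ∫⁻ w, f w ∂μ ≠ ∞) (z : X) :
    Tendsto (fun R : ℝ ↦ ∫⁻ w in (closedBall z R)ᶜ, f w ∂μ) atTop (𝓝 0) := by
  have : IsFiniteMeasure (μ.withDensity f) := isFiniteMeasure_withDensity hf
  have hempty : ⋂ R : ℝ, (closedBall z R)ᶜ = ∅ :=
    eq_empty_of_forall_notMem fun w hw ↦ mem_iInter.1 hw (dist w z) (mem_closedBall.2 le_rfl)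
  have h := tendsto_measure_iInter_atTop (μ := μ.withDensity f)
    (s := fun R : ℝ ↦ (closedBall z R)ᶜ)
    (fun R ↦ measurableSet_closedBall.compl.nullMeasurableSet)
    (fun R R' hRR' ↦ compl_subset_compl.2 (closedBall_subset_closedBall hRR'))
    ⟨0, measure_ne_top _ _⟩
  rw [hempty, measure_empty] at h
  refine h.congr fun R ↦ ?_
  exact withDensity_apply _ measurableSet_closedBall.compl

end PseudoMetric

open Complex in
theorem setLIntegral_ball_inv_edist (x : ℂ) (ρ : ℝ) :
    ∫⁻ z in ball x ρ, (edist z x)⁻¹ = ENNReal.ofReal (2 * π * ρ) := by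
  have hline (θ : ℝ) : {r : ℝ | x + r * exp (θ * I) ∈ ball x ρ} = ball 0 ρ := by
    ext r
    simp [dist_eq_norm, norm_exp_ofReal_mul_I]
  simp only [setLIntegral_inv_edist_eq_lintegral_volume_lines measurableSet_ball, hline,
    Real.volume_ball, setLIntegral_const, Real.volume_Ioo, sub_zero]
  rw [← ENNReal.ofReal_mul' pi_pos.le]
  ring_nf

theorem ofReal_mul_le_measure_closedBall_of_ae_le (μ : Measure ℂ) [SFinite μ] {z₀ : ℂ}
    {R c : ℝ} (hR : 0 < R)
    (hu : ∀ᵐ z, 2 * ENNReal.ofReal c ≤ ∫⁻ w, (edist w z)⁻¹ ∂μ)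
    (htail : 2 * ∫⁻ w in (closedBall z₀ (2 * R))ᶜ, (edist w z₀)⁻¹ ∂μ ≤ ENNReal.ofReal c) :
    ENNReal.ofReal (c * R / 6) ≤ μ (closedBall z₀ (2 * R)) := by
  have hnear : ∀ᵐ z ∂volume.restrict (ball z₀ R),
      ENNReal.ofReal c ≤ ∫⁻ w in closedBall z₀ (2 * R), (edist w z)⁻¹ ∂μ := by
    filter_upwards [ae_restrict_of_ae hu, ae_restrict_mem measurableSet_ball] with z hz hzR
    have hout := (setLIntegral_compl_closedBall_inv_edist_le μ hzR).trans htail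
    refine ENNReal.le_of_add_le_add_right (a := ENNReal.ofReal c) ENNReal.ofReal_ne_top ?_
    calc ENNReal.ofReal c + ENNReal.ofReal c = 2 * ENNReal.ofReal c := (two_mul _).symm
      _ ≤ ∫⁻ w, (edist w z)⁻¹ ∂μ := hz
      _ = (∫⁻ w in closedBall z₀ (2 * R), (edist w z)⁻¹ ∂μ) +
          ∫⁻ w in (closedBall z₀ (2 * R))ᶜ, (edist w z)⁻¹ ∂μ :=
        (lintegral_add_compl _ measurableSet_closedBall).symm
      _ ≤ _ := by gcongr
  have hfar (w : ℂ) (hw : w ∈ closedBall z₀ (2 * R)) :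
      ∫⁻ z in ball z₀ R, (edist w z)⁻¹ ≤ ENNReal.ofReal (2 * π * (3 * R)) := by
    simp_rw [edist_comm w, ← setLIntegral_ball_inv_edist w]
    refine lintegral_mono_set (ball_subset_ball' ?_)
    rw [dist_comm]
    linarith [mem_closedBall.1 hw]
  have hmass : ENNReal.ofReal c * volume (ball z₀ R) ≤
      ENNReal.ofReal (2 * π * (3 * R)) * μ (closedBall z₀ (2 * R)) := by
    calc ENNReal.ofReal c * volume (ball z₀ R)
        ≤ ∫⁻ z in ball z₀ R, ∫⁻ w in closedBall z₀ (2 * R), (edist w z)⁻¹ ∂μ := by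
          rw [← setLIntegral_const]; exact lintegral_mono_ae hnear
      _ = ∫⁻ w in closedBall z₀ (2 * R), (∫⁻ z in ball z₀ R, (edist w z)⁻¹) ∂μ :=
          lintegral_lintegral_swap
            (measurable_snd.edist measurable_fst).inv.aemeasurable
      _ ≤ ∫⁻ w in closedBall z₀ (2 * R), ENNReal.ofReal (2 * π * (3 * R)) ∂μ :=
          setLIntegral_mono' measurableSet_closedBall hfar
      _ = _ := setLIntegral_const _ _
  have hvol : ENNReal.ofReal c * volume (ball z₀ R) =
      ENNReal.ofReal (2 * π * (3 * R)) * ENNReal.ofReal (c * R / 6) := by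
    rw [Complex.volume_ball, ← ENNReal.ofReal_pow hR.le, ENNReal.coe_nnreal_eq,
      NNReal.coe_real_pi, ← ENNReal.ofReal_mul (by positivity),
      ← ENNReal.ofReal_mul' (by positivity),
      ← ENNReal.ofReal_mul (by positivity)]
    ring_nf
  rw [hvol] at hmass
  exact (ENNReal.mul_le_mul_iff_right (by simp [pi_pos, hR]) ENNReal.ofReal_ne_top).1 hmass

theorem lintegral_inv_edist_eq_top_of_ae_le (μ : Measure ℂ) [SFinite μ] {c : ℝ} (hc : 0 < c)
    (hu : ∀ᵐ z, ENNReal.ofReal c ≤ ∫⁻ w, (edist w z)⁻¹ ∂μ) (z₀ : ℂ) :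
    ∫⁻ w, (edist w z₀)⁻¹ ∂μ = ∞ := by
  by_contra hfin
  set A := (∫⁻ w, (edist w z₀)⁻¹ ∂μ).toReal
  have hA : 0 ≤ A := ENNReal.toReal_nonneg
  set T : ℝ → ℝ≥0∞ := fun R ↦ ∫⁻ w in (closedBall z₀ R)ᶜ, (edist w z₀)⁻¹ ∂μ
  obtain ⟨R, hTR, hR⟩ := (((tendsto_setLIntegral_compl_closedBall μ hfin z₀).eventually
    (gt_mem_nhds (ENNReal.ofReal_pos.2 (by positivity : 0 < c / 48)))).and
    (eventually_gt_atTop 0)).exists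
  -- large enough that `c R' / 24 > R A`, which the two mass bounds below rule out
  set R' := R * (24 * A / c + 1)
  have hR' : c * R' = 24 * A * R + c * R := by
    simp only [R']; field_simp
  have hRR' : R ≤ 2 * R' := by nlinarith [mul_nonneg hA hR.le]
  have hTmono : T (2 * R') ≤ T R :=
    lintegral_mono_set (compl_subset_compl.2 (closedBall_subset_closedBall hRR'))
  have hlow : ENNReal.ofReal (c / 2 * R' / 6) ≤ μ (closedBall z₀ (2 * R')) := by
    refine ofReal_mul_le_measure_closedBall_of_ae_le μ (by positivity) ?_ ?_
    · rwa [← ENNReal.ofReal_ofNat 2, ← ENNReal.ofReal_mul zero_le_two,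
        mul_div_cancel₀ _ two_ne_zero]
    · calc 2 * T (2 * R') ≤ 2 * ENNReal.ofReal (c / 48) := by gcongr; exact hTmono.trans hTR.le
        _ ≤ ENNReal.ofReal (c / 2) := by
          rw [← ENNReal.ofReal_ofNat 2, ← ENNReal.ofReal_mul zero_le_two]
          exact ENNReal.ofReal_le_ofReal (by linarith)
  have hup : μ (closedBall z₀ (2 * R')) ≤
      ENNReal.ofReal (R * A) + ENNReal.ofReal (2 * R' * (c / 48)) := by
    refine (measure_closedBall_le_add_mul_setLIntegral_compl μ z₀ hR (by positivity)).trans ?_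
    rw [ENNReal.ofReal_mul hR.le, ENNReal.ofReal_toReal hfin,
      ENNReal.ofReal_mul (by positivity : (0 : ℝ) ≤ 2 * R')]
    gcongr
  have hreal := hlow.trans hup
  rw [← ENNReal.ofReal_add (by positivity) (by positivity),
    ENNReal.ofReal_le_ofReal_iff (by positivity)] at hreal
  nlinarith [mul_pos hc hR]

theorem setLIntegral_mem_Icc_of_ae_mem_Icc {α : Type*} [MeasurableSpace α] {μ : Measure α}
    {s : Set α} {f : α → ℝ≥0∞} {a b : ℝ≥0∞} (h : ∀ᵐ x ∂μ.restrict s, f x ∈ Icc a b) :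
    ∫⁻ x in s, f x ∂μ ∈ Icc (a * μ s) (b * μ s) := by
  rw [← setLIntegral_const, ← setLIntegral_const]
  exact ⟨lintegral_mono_ae (h.mono fun _ hx ↦ hx.1),
    lintegral_mono_ae (h.mono fun _ hx ↦ hx.2)⟩

/-- There is no measurable set in the plane meeting almost every line through almost every
point in a measure lying in `[m, M]` for constants `0 < m ≤ M < ∞`. -/
theorem no_measurable_set_meeting_ae_lines_in_bounded_measure :
    ¬ ∃ (S : Set (ℝ × ℝ)) (m M : ℝ), MeasurableSet S ∧ 0 < m ∧ m ≤ M ∧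
      ∀ᵐ p : ℝ × ℝ, ∀ᵐ θ ∂(volume.restrict (Set.Ioo 0 π)),
        volume {r : ℝ | (p.1 + r * Real.cos θ, p.2 + r * Real.sin θ) ∈ S}
          ∈ Set.Icc (ENNReal.ofReal m) (ENNReal.ofReal M) := by
  rintro ⟨S, m, M, hS, hm, -, hae⟩
  set S' : Set ℂ := Complex.measurableEquivRealProd ⁻¹' S
  have hS' : MeasurableSet S' := Complex.measurableEquivRealProd.measurable hS
  have hvol (x : ℝ) : ENNReal.ofReal x * volume (Ioo 0 π) = ENNReal.ofReal (x * π) := by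
    rw [Real.volume_Ioo, sub_zero, ENNReal.ofReal_mul' pi_pos.le]
  have hpot : ∀ᵐ z : ℂ, ∫⁻ w in S', (edist w z)⁻¹ ∈
      Icc (ENNReal.ofReal (m * π)) (ENNReal.ofReal (M * π)) := by
    filter_upwards [Complex.volume_preserving_equiv_real_prod.quasiMeasurePreserving.ae hae]
      with z hz
    rw [setLIntegral_inv_edist_eq_lintegral_volume_lines hS', ← hvol, ← hvol]
    refine setLIntegral_mem_Icc_of_ae_mem_Icc (hz.mono fun θ hθ ↦ ?_)
    convert hθ using 3
    simp [S', Complex.exp_ofReal_mul_I_re, Complex.exp_ofReal_mul_I_im]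
  obtain ⟨z₀, hz₀⟩ := hpot.exists
  have hinfinite := lintegral_inv_edist_eq_top_of_ae_le _ (mul_pos hm pi_pos)
    (hpot.mono fun _ hz ↦ hz.1) z₀
  exact ENNReal.ofReal_ne_top (top_le_iff.1 (hinfinite ▸ hz₀.2))
end

section
/- There is no Lebesgue measurable set S ⊆ ℝ² such that for every ρ ∈ O(2), Σ_{n∈ℤ} 1_S(x − ρ(n,0)) = 1 for almost every x ∈ ℝ². -/
open MeasureTheory

open Set Real
open scoped RealInnerProductSpace ENNReal

namespace SteinhausProof

local notation "E2" => EuclideanSpace ℝ (Fin 2)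

noncomputable section

lemma tsum01_ofReal {f : ℤ → ℝ} (h01 : ∀ n, f n = 0 ∨ f n = 1)
    (h : ∑' n, f n = 1) : ∑' n, ENNReal.ofReal (f n) = 1 := by
  have hs : Summable f := by
    by_contra hs
    rw [tsum_eq_zero_of_not_summable hs] at h; norm_num at h
  rw [← ENNReal.ofReal_tsum_of_nonneg (fun n => by rcases h01 n with h' | h' <;> simp [h']) hs, h,
    ENNReal.ofReal_one]

lemma vol_eq_one_of_tiling (A : Set ℝ) (hA : MeasurableSet A)
    (h : ∀ᵐ s : ℝ, ∑' n : ℤ, A.indicator (1 : ℝ → ENNReal) (s - n) = 1) :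
    volume A = 1 := by
  have hdisj : Pairwise (Function.onFun Disjoint fun n : ℤ => A ∩ Ioc (n : ℝ) (n + 1)) := by
    intro m n hmn
    exact (pairwise_disjoint_Ioc_intCast (α := ℝ) hmn).mono inter_subset_right inter_subset_right
  have hmeas : ∀ n : ℤ, MeasurableSet (A ∩ Ioc (n : ℝ) (n + 1)) :=
    fun n => hA.inter measurableSet_Ioc
  have hBmeas : ∀ n : ℤ, MeasurableSet ((fun t => t + (n : ℝ)) ⁻¹' A) :=
    fun n => hA.preimage (measurable_add_const _)
  have hshift : ∀ n : ℤ, volume (A ∩ Ioc (n : ℝ) (n + 1)) =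
      volume (((fun t => t + (n : ℝ)) ⁻¹' A) ∩ Ioc (0 : ℝ) 1) := by
    intro n
    rw [← measure_preimage_add_right volume (n : ℝ) (A ∩ Ioc _ _)]
    congr 1
    ext t
    simp only [mem_preimage, mem_inter_iff, mem_Ioc]
    constructor
    · rintro ⟨h1, h2, h3⟩; exact ⟨h1, by linarith, by linarith⟩
    · rintro ⟨h1, h2, h3⟩; exact ⟨h1, by linarith, by linarith⟩
  calc volume A = ∑' n : ℤ, volume (A ∩ Ioc (n : ℝ) (n + 1)) := by
        conv_lhs => rw [show A = ⋃ n : ℤ, A ∩ Ioc (n : ℝ) (n + 1) by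
          rw [← inter_iUnion, iUnion_Ioc_intCast, inter_univ]]
        rw [measure_iUnion hdisj hmeas]
    _ = ∑' n : ℤ, ∫⁻ t in Ioc (0:ℝ) 1, ((fun t => t + (n : ℝ)) ⁻¹' A).indicator
          (1 : ℝ → ENNReal) t := by
        refine tsum_congr fun n => ?_
        rw [hshift n, lintegral_indicator_one (hBmeas n), Measure.restrict_apply (hBmeas n)]
    _ = ∫⁻ t in Ioc (0:ℝ) 1, ∑' n : ℤ, ((fun t => t + (n : ℝ)) ⁻¹' A).indicator
          (1 : ℝ → ENNReal) t := by
        rw [lintegral_tsum fun n => (measurable_one.indicator (hBmeas n)).aemeasurable]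
    _ = ∫⁻ _ in Ioc (0:ℝ) 1, (1 : ENNReal) := by
        refine setLIntegral_congr_fun_ae measurableSet_Ioc ?_
        filter_upwards [h] with t ht _
        have key : ∀ n : ℤ, ((fun t => t + (n : ℝ)) ⁻¹' A).indicator (1 : ℝ → ENNReal) t
            = A.indicator (1 : ℝ → ENNReal) (t - ((-n : ℤ) : ℝ)) := by
          intro n
          have harg : t - ((-n : ℤ) : ℝ) = t + (n : ℝ) := by push_cast; ring
          rw [harg]
          by_cases hm : t + (n : ℝ) ∈ A <;> simp [hm, Set.indicator_apply, mem_preimage]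
        simp_rw [key]
        exact ((Equiv.neg ℤ).tsum_eq fun m : ℤ => A.indicator (1 : ℝ → ENNReal)
          (t - (m : ℝ))).trans ht
    _ = 1 := by rw [setLIntegral_one, Real.volume_Ioc]; norm_num

lemma strip_prod (U : Set (ℝ × ℝ)) (hU : MeasurableSet U)
    (h : ∀ᵐ p : ℝ × ℝ, ∑' n : ℤ, U.indicator (1 : ℝ × ℝ → ENNReal) (p.1 - n, p.2) = 1)
    (a b : ℝ) :
    volume (U ∩ {p : ℝ × ℝ | p.2 ∈ Ioc a b}) = ENNReal.ofReal (b - a) := by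
  -- swap so that the second coordinate is the outer variable
  have hswap : ∀ᵐ q : ℝ × ℝ, ∑' n : ℤ, U.indicator (1 : ℝ × ℝ → ENNReal) (q.2 - n, q.1) = 1 := by
    have := (MeasureTheory.Measure.measurePreserving_swap (μ := (volume : Measure ℝ))
      (ν := (volume : Measure ℝ))).quasiMeasurePreserving.tendsto_ae.eventually h
    rw [← MeasureTheory.Measure.volume_eq_prod] at this
    exact this
  have haeae := MeasureTheory.Measure.ae_ae_of_ae_prod ((MeasureTheory.Measure.volume_eq_prod ℝ ℝ) ▸ hswap)
  have hmeas_strip : MeasurableSet {p : ℝ × ℝ | p.2 ∈ Ioc a b} :=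
    measurable_snd measurableSet_Ioc
  have hslice_meas : ∀ u : ℝ, MeasurableSet {s : ℝ | (s, u) ∈ U} :=
    fun u => hU.preimage (measurable_id.prodMk measurable_const)
  rw [MeasureTheory.Measure.volume_eq_prod, Measure.prod_apply_symm (hU.inter hmeas_strip)]
  have hcong : ∀ᵐ u : ℝ, volume ((fun s => (s, u)) ⁻¹' (U ∩ {p : ℝ × ℝ | p.2 ∈ Ioc a b}))
      = (Ioc a b).indicator (1 : ℝ → ENNReal) u := by
    filter_upwards [haeae] with u hu
    have hvol : volume {s : ℝ | (s, u) ∈ U} = 1 := by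
      refine vol_eq_one_of_tiling _ (hslice_meas u) ?_
      filter_upwards [hu] with s hs
      have : ∀ n : ℤ, {s : ℝ | (s, u) ∈ U}.indicator (1 : ℝ → ENNReal) (s - n)
          = U.indicator (1 : ℝ × ℝ → ENNReal) (s - n, u) := by
        intro n
        by_cases hm : (s - (n:ℝ), u) ∈ U <;> simp [hm, Set.indicator_apply, Set.mem_setOf_eq]
      simpa [this] using hs
    by_cases hmem : u ∈ Ioc a b
    · have : (fun s => (s, u)) ⁻¹' (U ∩ {p : ℝ × ℝ | p.2 ∈ Ioc a b}) = {s : ℝ | (s, u) ∈ U} := by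
        ext s; simp only [mem_preimage, mem_inter_iff, mem_setOf_eq, mem_empty_iff_false, iff_def]; tauto
      rw [this, hvol]; simp [hmem]
    · have : (fun s => (s, u)) ⁻¹' (U ∩ {p : ℝ × ℝ | p.2 ∈ Ioc a b}) = (∅ : Set ℝ) := by
        ext s; simp only [mem_preimage, mem_inter_iff, mem_setOf_eq, mem_empty_iff_false, iff_def]; tauto
      rw [this]; simp [hmem]
  rw [lintegral_congr_ae hcong, lintegral_indicator_one measurableSet_Ioc, Real.volume_Ioc]

noncomputable def Phi : E2 ≃ᵐ ℝ × ℝ :=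
  (MeasurableEquiv.toLp 2 (Fin 2 → ℝ)).symm.trans (MeasurableEquiv.finTwoArrow)

lemma Phi_mp : MeasurePreserving (Phi : E2 → ℝ × ℝ) volume volume := by
  have h1 := EuclideanSpace.volume_preserving_symm_measurableEquiv_toLp (Fin 2)
  have h2 := volume_preserving_finTwoArrow ℝ
  exact h2.comp h1

lemma Phi_symm_apply (p : ℝ × ℝ) (i : Fin 2) :
    (Phi.symm p : E2) i = if i = 0 then p.1 else p.2 := by
  fin_cases i <;> rfl

lemma Phi_symm_coord (p : ℝ × ℝ) : (Phi.symm p : E2) 1 = p.2 := by rfl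

lemma strip_E2 (T : Set E2) (hT : MeasurableSet T)
    (h : ∀ᵐ y : E2, ∑' n : ℤ, T.indicator (1 : E2 → ENNReal)
      (y - (n : ℝ) • EuclideanSpace.single (0 : Fin 2) (1 : ℝ)) = 1)
    (a b : ℝ) :
    volume (T ∩ {y : E2 | y 1 ∈ Ioc a b}) = ENNReal.ofReal (b - a) := by
  set U : Set (ℝ × ℝ) := Phi.symm ⁻¹' T with hUdef
  have hUmeas : MeasurableSet U := Phi.symm.measurable hT
  have hkey : ∀ (p : ℝ × ℝ) (n : ℤ), (Phi.symm (p.1 - n, p.2) : E2)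
      = Phi.symm p - (n : ℝ) • EuclideanSpace.single (0 : Fin 2) (1 : ℝ) := by
    intro p n
    ext i
    fin_cases i <;> simp [Phi_symm_apply, EuclideanSpace.single_apply]
  have hU : ∀ᵐ p : ℝ × ℝ, ∑' n : ℤ, U.indicator (1 : ℝ × ℝ → ENNReal) (p.1 - n, p.2) = 1 := by
    have := (MeasurePreserving.symm Phi Phi_mp).quasiMeasurePreserving.tendsto_ae.eventually h
    filter_upwards [this] with p hp
    have hind : ∀ n : ℤ, U.indicator (1 : ℝ × ℝ → ENNReal) (p.1 - n, p.2)
        = T.indicator (1 : E2 → ENNReal)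
          (Phi.symm p - (n : ℝ) • EuclideanSpace.single (0 : Fin 2) (1 : ℝ)) := by
      intro n
      rw [← hkey p n]
      by_cases hm : (Phi.symm (p.1 - n, p.2) : E2) ∈ T <;>
        simp [hm, Set.indicator_apply, hUdef, Set.mem_preimage]
    simpa [hind] using hp
  have hpre : Phi.symm ⁻¹' (T ∩ {y : E2 | y 1 ∈ Ioc a b})
      = U ∩ {p : ℝ × ℝ | p.2 ∈ Ioc a b} := by
    ext p
    simp [hUdef, Set.mem_preimage, Phi_symm_coord]
  have hsm : MeasurableSet {y : E2 | y 1 ∈ Ioc a b} :=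
    ((PiLp.continuous_apply 2 (fun _ : Fin 2 => ℝ) (1 : Fin 2)).measurable) measurableSet_Ioc
  have hmp := MeasurePreserving.symm Phi Phi_mp
  rw [← hmp.measure_preimage (hT.inter hsm).nullMeasurableSet, hpre]
  exact strip_prod U hUmeas hU a b

lemma exists_onb_with_one (w : E2) (hw : ‖w‖ = 1) :
    ∃ B : OrthonormalBasis (Fin 2) ℝ E2, B 1 = w := by
  have hcard : Module.finrank ℝ E2 = Fintype.card (Fin 2) := by
    simp [finrank_euclideanSpace_fin]
  have horth : Orthonormal ℝ (({0} : Set (Fin 2)).restrict (fun _ : Fin 2 => w)) := by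
    constructor
    · intro i; exact hw
    · intro i j hij
      exfalso
      exact hij (Subtype.ext (i.2.trans j.2.symm))
  obtain ⟨C, hC⟩ := horth.exists_orthonormalBasis_extension_of_card_eq hcard
  refine ⟨C.reindex (Equiv.swap 0 1), ?_⟩
  rw [OrthonormalBasis.reindex_apply]
  simpa using hC 0 rfl

lemma indicator01 {α : Type*} (s : Set α) (x : α) :
    s.indicator (fun _ => (1 : ℝ)) x = 0 ∨ s.indicator (fun _ => (1 : ℝ)) x = 1 := by
  by_cases h : x ∈ s <;> simp [h]

lemma strip_S (S : Set E2) (hS : MeasurableSet S)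
    (hyp : ∀ ρ : E2 ≃ₗᵢ[ℝ] E2,
        ∀ᵐ x : E2, ∑' n : ℤ, S.indicator (fun _ => (1 : ℝ))
          (x - ρ ((n : ℝ) • EuclideanSpace.single (0 : Fin 2) (1 : ℝ))) = 1)
    (w : E2) (hw : ‖w‖ = 1) (a b : ℝ) :
    volume (S ∩ {x : E2 | ⟪w, x⟫ ∈ Ioc a b}) = ENNReal.ofReal (b - a) := by
  obtain ⟨B, hB⟩ := exists_onb_with_one w hw
  set ρ : E2 ≃ₗᵢ[ℝ] E2 := B.repr.symm with hρdef
  have hmp : MeasurePreserving (ρ : E2 → E2) volume volume :=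
    B.measurePreserving_repr_symm
  have harg : ∀ n : ℤ, ρ ((n : ℝ) • EuclideanSpace.single (0 : Fin 2) (1 : ℝ))
      = (n : ℝ) • B 0 := by
    intro n
    rw [hρdef]
    rw [LinearIsometryEquiv.map_smul, B.repr_symm_single]
  -- the ENNReal version of the tiling hypothesis
  have hA : ∀ᵐ x : E2, ∑' n : ℤ, S.indicator (1 : E2 → ENNReal)
      (x - (n : ℝ) • B 0) = 1 := by
    filter_upwards [hyp ρ] with x hx
    have := tsum01_ofReal (fun n => indicator01 S _) hx
    refine Eq.trans (tsum_congr fun n => ?_) this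
    rw [harg n]
    by_cases hm : x - (n : ℝ) • B 0 ∈ S <;> simp [hm, Set.indicator_apply]
  -- transfer to T
  set T : Set E2 := ρ ⁻¹' S with hTdef
  have hTmeas : MeasurableSet T := hS.preimage hmp.measurable
  have hTind : ∀ z : E2, T.indicator (1 : E2 → ENNReal) z
      = S.indicator (1 : E2 → ENNReal) (ρ z) := by
    intro z; by_cases hm : ρ z ∈ S <;> simp [hTdef, Set.indicator_apply, Set.mem_preimage, hm]
  have hT : ∀ᵐ y : E2, ∑' n : ℤ, T.indicator (1 : E2 → ENNReal)
      (y - (n : ℝ) • EuclideanSpace.single (0 : Fin 2) (1 : ℝ)) = 1 := by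
    filter_upwards [hmp.quasiMeasurePreserving.tendsto_ae.eventually hA] with y hy
    refine Eq.trans (tsum_congr fun n => ?_) hy
    rw [hTind]
    congr 1
    rw [map_sub, harg n]
  have hstrip := strip_E2 T hTmeas hT a b
  have hpre : ρ ⁻¹' (S ∩ {x : E2 | ⟪w, x⟫ ∈ Ioc a b}) = T ∩ {y : E2 | y 1 ∈ Ioc a b} := by
    ext y
    have hin : ⟪w, ρ y⟫ = y 1 := by
      rw [← hB, ← B.repr_apply_apply (ρ y) 1, hρdef]
      simp
    simp only [Set.mem_preimage, Set.mem_inter_iff, Set.mem_setOf_eq, hTdef, hin]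
  have hsm : MeasurableSet {x : E2 | ⟪w, x⟫ ∈ Ioc a b} :=
    ((continuous_const.inner continuous_id).measurable) measurableSet_Ioc
  rw [← hmp.measure_preimage (hS.inter hsm).nullMeasurableSet, hpre, hstrip]

lemma lint_gauss {c : ℝ} (hc : 0 < c) :
    ∫⁻ t : ℝ, ENNReal.ofReal (Real.exp (-c * t ^ 2)) = ENNReal.ofReal (Real.sqrt (π / c)) := by
  rw [← ofReal_integral_eq_lintegral_ofReal (integrable_exp_neg_mul_sq hc)
    (Filter.Eventually.of_forall fun t => (Real.exp_pos _).le), integral_gaussian]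

lemma map_inner_eq (S : Set E2) (hS : MeasurableSet S)
    (hstrip : ∀ w : E2, ‖w‖ = 1 → ∀ a b : ℝ,
      volume (S ∩ {x : E2 | ⟪w, x⟫ ∈ Ioc a b}) = ENNReal.ofReal (b - a))
    (y : E2) (hy : y ≠ 0) :
    Measure.map (fun x : E2 => ⟪y, x⟫) (volume.restrict S)
      = ENNReal.ofReal (1 / ‖y‖) • volume := by
  have hny : (0:ℝ) < ‖y‖ := norm_pos_iff.mpr hy
  have hmeasπ : Measurable (fun x : E2 => ⟪y, x⟫) :=
    (continuous_const.inner continuous_id).measurable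
  have hval : ∀ a b : ℝ, (Measure.map (fun x : E2 => ⟪y, x⟫) (volume.restrict S)) (Ioc a b)
      = ENNReal.ofReal ((b - a) / ‖y‖) := by
    intro a b
    rw [Measure.map_apply hmeasπ measurableSet_Ioc,
      Measure.restrict_apply (hmeasπ measurableSet_Ioc)]
    have hw : ‖(‖y‖⁻¹ • y : E2)‖ = 1 := norm_smul_inv_norm hy
    have hset : (fun x : E2 => ⟪y, x⟫) ⁻¹' Ioc a b ∩ S
        = S ∩ {x : E2 | ⟪(‖y‖⁻¹ • y : E2), x⟫ ∈ Ioc (a / ‖y‖) (b / ‖y‖)} := by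
      ext x
      have hin : ⟪(‖y‖⁻¹ • y : E2), x⟫ = ⟪y, x⟫ / ‖y‖ := by
        rw [real_inner_smul_left, inv_mul_eq_div]
      simp only [mem_inter_iff, mem_preimage, mem_setOf_eq, mem_Ioc, hin]
      constructor
      · rintro ⟨⟨h1, h2⟩, h3⟩
        exact ⟨h3, by gcongr, by gcongr⟩
      · rintro ⟨h3, h1, h2⟩
        rw [div_lt_div_iff_of_pos_right hny] at h1
        rw [div_le_div_iff_of_pos_right hny] at h2
        exact ⟨⟨h1, h2⟩, h3⟩
    rw [hset, hstrip _ hw, div_sub_div_same]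
  have hloc : IsLocallyFiniteMeasure
      (Measure.map (fun x : E2 => ⟪y, x⟫) (volume.restrict S)) := by
    constructor
    intro t
    refine ⟨Ioc (t - 1) (t + 1), Ioc_mem_nhds (by linarith) (by linarith), ?_⟩
    rw [hval]
    exact ENNReal.ofReal_lt_top
  refine Measure.ext_of_Ioc _ _ fun a b hab => ?_
  rw [hval a b, Measure.smul_apply, smul_eq_mul, Real.volume_Ioc,
    ← ENNReal.ofReal_mul (by positivity), one_div, inv_mul_eq_div]

lemma lint_gauss_strip (S : Set E2) (hS : MeasurableSet S)
    (hstrip : ∀ w : E2, ‖w‖ = 1 → ∀ a b : ℝ,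
      volume (S ∩ {x : E2 | ⟪w, x⟫ ∈ Ioc a b}) = ENNReal.ofReal (b - a))
    (y : E2) (hy : y ≠ 0) {c : ℝ} (hc : 0 < c) :
    ∫⁻ x, ENNReal.ofReal (Real.exp (-c * ⟪y, x⟫ ^ 2)) ∂(volume.restrict S)
      = ENNReal.ofReal (Real.sqrt (π / c) / ‖y‖) := by
  have hmeasπ : Measurable (fun x : E2 => ⟪y, x⟫) :=
    (continuous_const.inner continuous_id).measurable
  have hF : Measurable (fun t : ℝ => ENNReal.ofReal (Real.exp (-c * t ^ 2))) := by
    exact (Real.continuous_exp.comp (by continuity)).measurable.ennreal_ofReal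
  calc ∫⁻ x, ENNReal.ofReal (Real.exp (-c * ⟪y, x⟫ ^ 2)) ∂(volume.restrict S)
      = ∫⁻ t, ENNReal.ofReal (Real.exp (-c * t ^ 2))
          ∂(Measure.map (fun x : E2 => ⟪y, x⟫) (volume.restrict S)) := by
        rw [lintegral_map hF hmeasπ]
    _ = ENNReal.ofReal (1 / ‖y‖) * ∫⁻ t, ENNReal.ofReal (Real.exp (-c * t ^ 2)) := by
        rw [map_inner_eq S hS hstrip y hy, lintegral_smul_measure, smul_eq_mul]
    _ = ENNReal.ofReal (Real.sqrt (π / c) / ‖y‖) := by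
        rw [lint_gauss hc, ← ENNReal.ofReal_mul (by positivity), one_div, inv_mul_eq_div]

lemma exists_onb_with_zero (u : E2) (hu : ‖u‖ = 1) :
    ∃ B : OrthonormalBasis (Fin 2) ℝ E2, B 0 = u := by
  obtain ⟨B, hB⟩ := exists_onb_with_one u hu
  refine ⟨B.reindex (Equiv.swap 0 1), ?_⟩
  rw [OrthonormalBasis.reindex_apply]
  simpa using hB


lemma gauss2d {c : ℝ} (hc : 0 < c) (x : E2) :
    ∫⁻ y : E2, ENNReal.ofReal (Real.exp (-c * ⟪x, y⟫ ^ 2) * Real.exp (-π * ‖y‖ ^ 2))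
      = ENNReal.ofReal (Real.sqrt (π / (c * ‖x‖ ^ 2 + π))) := by
  obtain ⟨u, hu, hxu⟩ : ∃ u : E2, ‖u‖ = 1 ∧ x = ‖x‖ • u := by
    rcases eq_or_ne x 0 with rfl | hx
    · exact ⟨EuclideanSpace.single 0 1, by simp, by simp⟩
    · refine ⟨‖x‖⁻¹ • x, norm_smul_inv_norm hx, ?_⟩
      rw [smul_smul, mul_inv_cancel₀ (norm_ne_zero_iff.2 hx), one_smul]
  obtain ⟨B, hB⟩ := exists_onb_with_zero u hu
  have hmp : MeasurePreserving (B.repr.symm : EuclideanSpace ℝ (Fin 2) → E2) volume volume :=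
    B.measurePreserving_repr_symm
  have hcont1 : Continuous fun y : E2 => Real.exp (-c * ⟪x, y⟫ ^ 2) :=
    Real.continuous_exp.comp (continuous_const.mul
      ((continuous_const.inner continuous_id).pow 2))
  have hcont2 : Continuous fun y : E2 => Real.exp (-π * ‖y‖ ^ 2) :=
    Real.continuous_exp.comp (continuous_const.mul (continuous_norm.pow 2))
  have hmeasF : Measurable (fun y : E2 =>
      ENNReal.ofReal (Real.exp (-c * ⟪x, y⟫ ^ 2) * Real.exp (-π * ‖y‖ ^ 2))) :=
    (hcont1.mul hcont2).measurable.ennreal_ofReal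
  rw [← hmp.lintegral_comp hmeasF]
  have hinner : ∀ z : EuclideanSpace ℝ (Fin 2), ⟪x, B.repr.symm z⟫ = ‖x‖ * z 0 := by
    intro z
    nth_rewrite 1 [hxu]
    rw [real_inner_smul_left, ← hB, ← B.repr_apply_apply (B.repr.symm z) 0]
    simp
  have hnorm : ∀ z : EuclideanSpace ℝ (Fin 2), ‖(B.repr.symm z : E2)‖ = ‖z‖ :=
    fun z => LinearIsometryEquiv.norm_map _ _
  have hsplit : ∀ z : EuclideanSpace ℝ (Fin 2),
      ENNReal.ofReal (Real.exp (-c * ⟪x, B.repr.symm z⟫ ^ 2)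
        * Real.exp (-π * ‖(B.repr.symm z : E2)‖ ^ 2))
      = (fun t : ℝ => ENNReal.ofReal (Real.exp (-(c * ‖x‖ ^ 2 + π) * t ^ 2))) (z 0)
        * (fun t : ℝ => ENNReal.ofReal (Real.exp (-π * t ^ 2))) (z 1) := by
    intro z
    simp only
    rw [hinner, hnorm, ← ENNReal.ofReal_mul (by positivity)]
    congr 1
    have hz : ‖z‖ ^ 2 = (z 0) ^ 2 + (z 1) ^ 2 := by
      rw [EuclideanSpace.norm_eq, Real.sq_sqrt (by positivity)]
      simp [Fin.sum_univ_two, sq_abs]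
    rw [hz, ← Real.exp_add, ← Real.exp_add]
    ring_nf
  simp_rw [hsplit]
  have hf1 : Measurable fun t : ℝ => ENNReal.ofReal (Real.exp (-(c * ‖x‖ ^ 2 + π) * t ^ 2)) :=
    (Real.continuous_exp.comp (continuous_const.mul (continuous_pow 2))).measurable.ennreal_ofReal
  have hg1 : Measurable fun t : ℝ => ENNReal.ofReal (Real.exp (-π * t ^ 2)) :=
    (Real.continuous_exp.comp (continuous_const.mul (continuous_pow 2))).measurable.ennreal_ofReal
  calc ∫⁻ z : EuclideanSpace ℝ (Fin 2),
        (fun t : ℝ => ENNReal.ofReal (Real.exp (-(c * ‖x‖ ^ 2 + π) * t ^ 2))) (z 0)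
          * (fun t : ℝ => ENNReal.ofReal (Real.exp (-π * t ^ 2))) (z 1)
      = ∫⁻ p : ℝ × ℝ,
        (fun t : ℝ => ENNReal.ofReal (Real.exp (-(c * ‖x‖ ^ 2 + π) * t ^ 2))) p.1
          * (fun t : ℝ => ENNReal.ofReal (Real.exp (-π * t ^ 2))) p.2 := by
        exact Phi_mp.lintegral_comp ((hf1.comp measurable_fst).mul (hg1.comp measurable_snd))
    _ = (∫⁻ t : ℝ, ENNReal.ofReal (Real.exp (-(c * ‖x‖ ^ 2 + π) * t ^ 2)))
          * ∫⁻ t : ℝ, ENNReal.ofReal (Real.exp (-π * t ^ 2)) := by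
        rw [MeasureTheory.Measure.volume_eq_prod]
        exact lintegral_prod_mul hf1.aemeasurable hg1.aemeasurable
    _ = ENNReal.ofReal (Real.sqrt (π / (c * ‖x‖ ^ 2 + π))) := by
        rw [lint_gauss (by positivity), lint_gauss Real.pi_pos,
          div_self (ne_of_gt Real.pi_pos), Real.sqrt_one, ENNReal.ofReal_one, mul_one]

lemma exp_gauss_int : ∫⁻ y : E2, ENNReal.ofReal (Real.exp (-π * ‖y‖ ^ 2)) = 1 := by
  have h := gauss2d one_pos (0 : E2)
  have h0 : ∀ y : E2, ENNReal.ofReal (Real.exp (-1 * ⟪(0:E2), y⟫ ^ 2) * Real.exp (-π * ‖y‖ ^ 2))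
      = ENNReal.ofReal (Real.exp (-π * ‖y‖ ^ 2)) := by
    intro y; rw [inner_zero_left]; norm_num
  rw [lintegral_congr h0] at h
  rw [h, norm_zero]
  norm_num [div_self Real.pi_pos.ne']

lemma C0_lt_top : ∫⁻ y : E2, ENNReal.ofReal (Real.exp (-π * ‖y‖ ^ 2) / ‖y‖) < ⊤ := by
  set G : E2 → ℝ≥0∞ := fun y =>
    ∑' k : ℕ, (Metric.ball (0 : E2) ((1/2 : ℝ) ^ k)).indicator
      (fun _ => (2 : ℝ≥0∞) ^ (k + 1)) y with hGdef
  have hpt : ∀ y : E2, ENNReal.ofReal (Real.exp (-π * ‖y‖ ^ 2) / ‖y‖)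
      ≤ G y + ENNReal.ofReal (Real.exp (-π * ‖y‖ ^ 2)) := by
    intro y
    rcases eq_or_ne y 0 with rfl | hy0
    · simp
    have hny : (0:ℝ) < ‖y‖ := norm_pos_iff.mpr hy0
    rcases lt_or_ge ‖y‖ 1 with h1 | h1
    · -- small y : use the dyadic part
      have hPex : ∃ k : ℕ, (1/2 : ℝ) ^ (k + 1) ≤ ‖y‖ := by
        obtain ⟨n, hn⟩ := exists_pow_lt_of_lt_one hny (by norm_num : (1/2 : ℝ) < 1)
        refine ⟨n, ?_⟩
        have hstep : (1/2:ℝ) ^ (n+1) ≤ (1/2:ℝ) ^ n :=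
          pow_le_pow_of_le_one (by norm_num) (by norm_num) (by omega)
        linarith
      set k := Nat.find hPex with hkdef
      have hklow : (1/2 : ℝ) ^ (k + 1) ≤ ‖y‖ := Nat.find_spec hPex
      have hkup : ‖y‖ < (1/2 : ℝ) ^ k := by
        rcases Nat.eq_zero_or_pos k with hk0 | hkpos
        · rw [hk0]; simpa using h1
        · have := Nat.find_min hPex (m := k - 1) (by omega)
          push_neg at this
          have hk1 : k - 1 + 1 = k := by omega
          rwa [hk1] at this
      have hmem : y ∈ Metric.ball (0 : E2) ((1/2 : ℝ) ^ k) := by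
        simpa [Metric.mem_ball, dist_eq_norm] using hkup
      have hG : (2 : ℝ≥0∞) ^ (k + 1) ≤ G y := by
        rw [hGdef]
        refine le_trans ?_ (ENNReal.le_tsum k)
        rw [Set.indicator_of_mem hmem]
      refine le_trans ?_ (le_trans hG le_self_add)
      have hreal : Real.exp (-π * ‖y‖ ^ 2) / ‖y‖ ≤ 2 ^ (k + 1) := by
        have hexp : Real.exp (-π * ‖y‖ ^ 2) ≤ 1 := by
          rw [Real.exp_le_one_iff]
          nlinarith [Real.pi_pos, sq_nonneg ‖y‖]
        have h2 : Real.exp (-π * ‖y‖ ^ 2) / ‖y‖ ≤ 1 / ‖y‖ := by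
          gcongr
        refine h2.trans ?_
        rw [div_le_iff₀ hny]
        calc (1:ℝ) = 2 ^ (k+1) * (1/2 : ℝ) ^ (k+1) := by
              rw [one_div, inv_pow, mul_inv_cancel₀ (by positivity)]
          _ ≤ 2 ^ (k+1) * ‖y‖ := by
              apply mul_le_mul_of_nonneg_left hklow (by positivity)
      calc ENNReal.ofReal (Real.exp (-π * ‖y‖ ^ 2) / ‖y‖)
          ≤ ENNReal.ofReal ((2:ℝ) ^ (k+1)) := ENNReal.ofReal_le_ofReal hreal
        _ = (2 : ℝ≥0∞) ^ (k + 1) := by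
            rw [ENNReal.ofReal_pow (by norm_num)]
            norm_num
    · -- large y
      refine le_trans ?_ le_add_self
      apply ENNReal.ofReal_le_ofReal
      exact div_le_self (Real.exp_pos _).le h1
  have hGint : ∫⁻ y : E2, G y < ⊤ := by
    rw [hGdef]
    rw [lintegral_tsum
      (fun k => (measurable_const.indicator Metric.isOpen_ball.measurableSet).aemeasurable)]
    have hball : ∀ k : ℕ, ∫⁻ y : E2, (Metric.ball (0 : E2) ((1/2 : ℝ) ^ k)).indicator
        (fun _ => (2 : ℝ≥0∞) ^ (k + 1)) y
        = (2:ℝ≥0∞) ^ (k+1) * (ENNReal.ofReal ((1/2:ℝ) ^ k) ^ 2 * volume (Metric.ball (0:E2) 1)) := by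
      intro k
      rw [lintegral_indicator_const Metric.isOpen_ball.measurableSet]
      congr 1
      rw [Measure.addHaar_ball volume (0 : E2) (by positivity)]
      rw [finrank_euclideanSpace_fin]
      rw [ENNReal.ofReal_pow (by positivity)]
    simp_rw [hball]
    have hV : volume (Metric.ball (0:E2) 1) < ⊤ := measure_ball_lt_top
    set V := volume (Metric.ball (0:E2) 1)
    have hterm : ∀ k : ℕ, (2:ℝ≥0∞) ^ (k+1) * (ENNReal.ofReal ((1/2:ℝ) ^ k) ^ 2 * V)
        = (2 * V) * (2⁻¹ : ℝ≥0∞) ^ k := by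
      intro k
      have hhalf : ENNReal.ofReal (1/2 : ℝ) = (2⁻¹ : ℝ≥0∞) := by
        rw [one_div, ENNReal.ofReal_inv_of_pos two_pos]
        norm_num
      have h12 : ENNReal.ofReal ((1/2:ℝ) ^ k) = (2⁻¹ : ℝ≥0∞) ^ k := by
        rw [ENNReal.ofReal_pow (by norm_num), hhalf]
      have h2k : (2:ℝ≥0∞) ^ k * (2⁻¹:ℝ≥0∞) ^ k = 1 := by
        rw [← mul_pow, ENNReal.mul_inv_cancel (by norm_num) (by norm_num), one_pow]
      rw [h12, pow_succ]
      calc (2:ℝ≥0∞)^k * 2 * (((2⁻¹:ℝ≥0∞)^k) ^ 2 * V)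
          = ((2:ℝ≥0∞)^k * (2⁻¹:ℝ≥0∞)^k) * ((2 * V) * (2⁻¹:ℝ≥0∞)^k) := by ring
        _ = (2 * V) * (2⁻¹:ℝ≥0∞)^k := by rw [h2k, one_mul]
    simp_rw [hterm]
    rw [ENNReal.tsum_mul_left]
    rw [ENNReal.tsum_geometric]
    refine ENNReal.mul_lt_top (ENNReal.mul_lt_top (by norm_num) hV) ?_
    rw [ENNReal.one_sub_inv_two]
    exact ENNReal.inv_lt_top.mpr (by norm_num)
  have hGmeas : Measurable G := by
    rw [hGdef]
    exact Measurable.ennreal_tsum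
      (fun k => measurable_const.indicator Metric.isOpen_ball.measurableSet)
  calc ∫⁻ y : E2, ENNReal.ofReal (Real.exp (-π * ‖y‖ ^ 2) / ‖y‖)
      ≤ ∫⁻ y : E2, (G y + ENNReal.ofReal (Real.exp (-π * ‖y‖ ^ 2))) := lintegral_mono hpt
    _ = (∫⁻ y : E2, G y) + ∫⁻ y : E2, ENNReal.ofReal (Real.exp (-π * ‖y‖ ^ 2)) :=
        lintegral_add_left hGmeas _
    _ < ⊤ := by
        rw [exp_gauss_int]
        exact ENNReal.add_lt_top.mpr ⟨hGint, ENNReal.one_lt_top⟩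

lemma key_identity (S : Set E2) (hS : MeasurableSet S)
    (hstrip : ∀ w : E2, ‖w‖ = 1 → ∀ a b : ℝ,
      volume (S ∩ {x : E2 | ⟪w, x⟫ ∈ Ioc a b}) = ENNReal.ofReal (b - a))
    {c : ℝ} (hc : 0 < c) :
    ∫⁻ x, ENNReal.ofReal (Real.sqrt (π / (c * ‖x‖ ^ 2 + π))) ∂(volume.restrict S)
      = ENNReal.ofReal (Real.sqrt (π / c))
        * ∫⁻ y : E2, ENNReal.ofReal (Real.exp (-π * ‖y‖ ^ 2) / ‖y‖) := by
  have hFcont : Continuous (fun p : E2 × E2 =>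
      ENNReal.ofReal (Real.exp (-c * ⟪p.1, p.2⟫ ^ 2) * Real.exp (-π * ‖p.2‖ ^ 2))) := by
    apply ENNReal.continuous_ofReal.comp
    exact (Real.continuous_exp.comp (continuous_const.mul (continuous_inner.pow 2))).mul
      (Real.continuous_exp.comp (continuous_const.mul (continuous_snd.norm.pow 2)))
  have hswap := lintegral_lintegral_swap (μ := volume.restrict S) (ν := (volume : Measure E2))
    (f := fun x y => ENNReal.ofReal (Real.exp (-c * ⟪x, y⟫ ^ 2) * Real.exp (-π * ‖y‖ ^ 2)))
    hFcont.measurable.aemeasurable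
  calc ∫⁻ x, ENNReal.ofReal (Real.sqrt (π / (c * ‖x‖ ^ 2 + π))) ∂(volume.restrict S)
      = ∫⁻ x, (∫⁻ y : E2, ENNReal.ofReal (Real.exp (-c * ⟪x, y⟫ ^ 2)
          * Real.exp (-π * ‖y‖ ^ 2))) ∂(volume.restrict S) := by
        refine lintegral_congr fun x => ?_
        rw [gauss2d hc x]
    _ = ∫⁻ y : E2, (∫⁻ x, ENNReal.ofReal (Real.exp (-c * ⟪x, y⟫ ^ 2)
          * Real.exp (-π * ‖y‖ ^ 2)) ∂(volume.restrict S)) := hswap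
    _ = ∫⁻ y : E2, ENNReal.ofReal (Real.sqrt (π / c))
          * ENNReal.ofReal (Real.exp (-π * ‖y‖ ^ 2) / ‖y‖) := by
        refine lintegral_congr_ae ?_
        filter_upwards [compl_mem_ae_iff.mpr (measure_singleton (0 : E2))] with y hy
        have hy0 : y ≠ 0 := hy
        have hsplit : ∀ x : E2, ENNReal.ofReal (Real.exp (-c * ⟪x, y⟫ ^ 2)
            * Real.exp (-π * ‖y‖ ^ 2))
            = ENNReal.ofReal (Real.exp (-π * ‖y‖ ^ 2))
              * ENNReal.ofReal (Real.exp (-c * ⟪y, x⟫ ^ 2)) := by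
          intro x
          rw [← ENNReal.ofReal_mul (Real.exp_pos _).le, real_inner_comm x y, mul_comm]
        simp_rw [hsplit]
        rw [lintegral_const_mul _ (by
          exact ((Real.continuous_exp.comp (continuous_const.mul
            ((continuous_const.inner continuous_id).pow 2)))).measurable.ennreal_ofReal)]
        rw [lint_gauss_strip S hS hstrip y hy0 hc]
        rw [← ENNReal.ofReal_mul (Real.exp_pos _).le,
          ← ENNReal.ofReal_mul (by positivity)]
        congr 1
        field_simp
    _ = ENNReal.ofReal (Real.sqrt (π / c))
          * ∫⁻ y : E2, ENNReal.ofReal (Real.exp (-π * ‖y‖ ^ 2) / ‖y‖) := by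
        rw [lintegral_const_mul _ (by
          exact ((Real.continuous_exp.comp (continuous_const.mul
            (continuous_norm.pow 2))).measurable.div
            continuous_norm.measurable).ennreal_ofReal)]

end

end SteinhausProof

open SteinhausProof

local notation "E2" => EuclideanSpace ℝ (Fin 2)

/-- There is no measurable Steinhaus set for `ℤ × {0}` in the plane: no measurable `S ⊆ ℝ²`
tiles the plane (a.e.) when translated by every rotated copy of `ℤ × {0}`. -/
theorem no_measurable_steinhaus_set_for_integers :
    ¬ ∃ S : Set (EuclideanSpace ℝ (Fin 2)), MeasurableSet S ∧
      ∀ ρ : EuclideanSpace ℝ (Fin 2) ≃ₗᵢ[ℝ] EuclideanSpace ℝ (Fin 2),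
        ∀ᵐ x : EuclideanSpace ℝ (Fin 2),
          ∑' n : ℤ, S.indicator (fun _ => (1 : ℝ))
            (x - ρ ((n : ℝ) • EuclideanSpace.single (0 : Fin 2) (1 : ℝ))) = 1 := by
  rintro ⟨S, hS, hyp⟩
  have hstrip := strip_S S hS hyp
  set ν := volume.restrict S with hν
  set C0 := ∫⁻ y : E2, ENNReal.ofReal (Real.exp (-π * ‖y‖ ^ 2) / ‖y‖) with hC0
  -- the two key identities
  have hkey1 : ∫⁻ x, ENNReal.ofReal (Real.sqrt (π / (π * ‖x‖ ^ 2 + π))) ∂ν = C0 := by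
    rw [key_identity S hS hstrip Real.pi_pos, div_self Real.pi_pos.ne', Real.sqrt_one,
      ENNReal.ofReal_one, one_mul]
  have h4pi : (0:ℝ) < 4 * π := by positivity
  have hkey2 : ∫⁻ x, ENNReal.ofReal (Real.sqrt (π / (4 * π * ‖x‖ ^ 2 + π))) ∂ν
      = ENNReal.ofReal (1/2) * C0 := by
    rw [key_identity S hS hstrip h4pi]
    congr 2
    rw [show π / (4 * π) = (1/2:ℝ)^2 by field_simp; ring, Real.sqrt_sq (by norm_num)]
  set f : E2 → ℝ := fun x => Real.sqrt (π / (π * ‖x‖ ^ 2 + π)) with hf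
  set g : E2 → ℝ := fun x => Real.sqrt (π / (4 * π * ‖x‖ ^ 2 + π)) with hg
  have hApos : ∀ x : E2, (0:ℝ) < π * ‖x‖ ^ 2 + π := by
    intro x; nlinarith [Real.pi_pos, sq_nonneg ‖x‖]
  have hBpos : ∀ x : E2, (0:ℝ) < 4 * π * ‖x‖ ^ 2 + π := by
    intro x; nlinarith [Real.pi_pos, sq_nonneg ‖x‖]
  have hlt : ∀ x : E2, (1/2) * f x < g x := by
    intro x
    have hfx : (0:ℝ) ≤ f x := Real.sqrt_nonneg _
    have hgx : (0:ℝ) ≤ g x := Real.sqrt_nonneg _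
    refine lt_of_pow_lt_pow_left₀ 2 hgx ?_
    have h1 : ((1/2) * f x) ^ 2 = (1/4) * (π / (π * ‖x‖ ^ 2 + π)) := by
      rw [mul_pow, hf]
      rw [Real.sq_sqrt (le_of_lt (div_pos Real.pi_pos (hApos x)))]
      norm_num
    have h2 : (g x) ^ 2 = π / (4 * π * ‖x‖ ^ 2 + π) := by
      rw [hg, Real.sq_sqrt (le_of_lt (div_pos Real.pi_pos (hBpos x)))]
    rw [h1, h2]
    rw [show (1/4:ℝ) * (π / (π * ‖x‖ ^ 2 + π)) = π / (4 * (π * ‖x‖ ^ 2 + π)) by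
      field_simp]
    apply div_lt_div_of_pos_left Real.pi_pos (hBpos x)
    nlinarith [Real.pi_pos]
  -- measurability
  have hmf : Measurable fun x : E2 => ENNReal.ofReal ((1/2) * f x) := by
    apply Measurable.ennreal_ofReal
    apply Measurable.const_mul
    exact (Real.continuous_sqrt.measurable).comp
      ((measurable_const.div ((continuous_const.mul (continuous_norm.pow 2)).add
        continuous_const).measurable))
  have hmg : Measurable fun x : E2 => ENNReal.ofReal (g x) := by
    apply Measurable.ennreal_ofReal
    exact (Real.continuous_sqrt.measurable).comp
      ((measurable_const.div ((continuous_const.mul (continuous_norm.pow 2)).add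
        continuous_const).measurable))
  -- ∫ (1/2) f = ∫ g
  have hhalf : ∫⁻ x, ENNReal.ofReal ((1/2) * f x) ∂ν = ENNReal.ofReal (1/2) * C0 := by
    have : ∀ x : E2, ENNReal.ofReal ((1/2) * f x)
        = ENNReal.ofReal (1/2) * ENNReal.ofReal (f x) := fun x =>
      ENNReal.ofReal_mul (by norm_num)
    simp_rw [this]
    rw [lintegral_const_mul _ (by
      exact (Real.continuous_sqrt.measurable).comp
        ((measurable_const.div ((continuous_const.mul (continuous_norm.pow 2)).add
          continuous_const).measurable)) |>.ennreal_ofReal)]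
    rw [hkey1]
  have hfin : ∫⁻ x, ENNReal.ofReal ((1/2) * f x) ∂ν ≠ ⊤ := by
    rw [hhalf]
    exact (ENNReal.mul_lt_top ENNReal.ofReal_lt_top C0_lt_top).ne
  have hle : ∀ᵐ x ∂ν, ENNReal.ofReal ((1/2) * f x) ≤ ENNReal.ofReal (g x) :=
    Filter.Eventually.of_forall fun x => ENNReal.ofReal_le_ofReal (hlt x).le
  have hsub : ∫⁻ x, (ENNReal.ofReal (g x) - ENNReal.ofReal ((1/2) * f x)) ∂ν = 0 := by
    rw [lintegral_sub hmf hfin hle, hkey2, hhalf, tsub_self]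
  have hae := (lintegral_eq_zero_iff (hmg.sub hmf)).mp hsub
  have hFalse : ∀ᵐ _x ∂ν, False := by
    filter_upwards [hae] with x hx
    have hx0 : ENNReal.ofReal (g x) ≤ ENNReal.ofReal ((1/2) * f x) :=
      tsub_eq_zero_iff_le.mp hx
    have : g x ≤ (1/2) * f x := by
      rwa [ENNReal.ofReal_le_ofReal_iff (by positivity)] at hx0
    exact absurd this (not_le.mpr (hlt x))
  have hν0 : ν univ = 0 := by
    rw [Filter.eventually_false_iff_eq_bot, ae_eq_bot] at hFalse
    simpa using hFalse
  have hSvol : volume S = 0 := by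
    have h := Measure.restrict_apply_univ (μ := (volume : Measure E2)) S
    rw [hν, h] at hν0
    exact hν0
  have hone := hstrip (EuclideanSpace.single (0 : Fin 2) (1:ℝ)) (by simp) 0 1
  rw [show ((1:ℝ) - 0) = 1 by norm_num, ENNReal.ofReal_one] at hone
  have : (1:ℝ≥0∞) ≤ 0 := by
    rw [← hone, ← hSvol]
    exact measure_mono inter_subset_left
  exact absurd this (by norm_num)
end

section
/- Let S ⊆ ℝ² be measurable with ∫_{ℝ²} 1_S(w)/|p − w| dw = π for almost every p ∈ ℝ². Then the function f : ℝ³ → ℝ defined by f(z) = ∫_{ℝ²} 1_S(w)/|z−w| dw (where ℝ² is embedded as the plane x₃ = 0 in ℝ³) is continuous on ℝ³. -/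
/-!
Write `v` for the projection of `z` to the plane. Since `|z - w| ≥ |v - w|`, the contribution of
`S` near `v` is bounded by `∫_{|x|<r} 1/|x| dx`, which tends to `0` with `r` uniformly in `v`.
Away from a small square around a point `q` where the planar potential is finite,
`|q - w| ≤ 4 |z - w|` for all `z` close to `q`, so the remaining part of the integral is continuous
by dominated convergence. Such points `q` are dense, as the planar potential equals `π` almost
everywhere.
-/

open MeasureTheory Real Metric Filter Topology Module

theorem Metric.continuousAt_of_locally_uniform_approx {α β : Type*} [TopologicalSpace α]
    [PseudoMetricSpace β] {f : α → β} {x : α}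
    (h : ∀ ε > 0, ∃ t ∈ 𝓝 x, ∃ F : α → β, ContinuousAt F x ∧ ∀ y ∈ t, dist (f y) (F y) < ε) :
    ContinuousAt f x :=
  continuousAt_of_locally_uniform_approx_of_continuousAt fun _u hu => by
    obtain ⟨ε, hε, hεu⟩ := mem_uniformity_dist.1 hu
    obtain ⟨t, ht, F, hF, hfF⟩ := h ε hε
    exact ⟨t, ht, F, hF, fun y hy => hεu (hfF y hy)⟩

theorem preimage_sub_right_ball {E : Type*} [SeminormedAddCommGroup E] (v : E) (r : ℝ) :
    (· - v) ⁻¹' ball (0 : E) r = ball v r := by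
  ext w
  simp [dist_eq_norm]

theorem setIntegral_ball_inv_dist {E : Type*} [NormedAddCommGroup E] [MeasurableSpace E]
    [BorelSpace E] {μ : Measure E} [μ.IsAddRightInvariant] (v : E) (r : ℝ) :
    ∫ w in ball v r, (dist w v)⁻¹ ∂μ = ∫ x in ball 0 r, ‖x‖⁻¹ ∂μ := by
  simpa [preimage_sub_right_ball, dist_eq_norm] using
    (measurePreserving_sub_right μ v).setIntegral_preimage_emb (measurableEmbedding_subRight v)
      (fun x => ‖x‖⁻¹) (ball 0 r)

section InvNorm

variable {E : Type*} [NormedAddCommGroup E] [NormedSpace ℝ E] [FiniteDimensional ℝ E]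
  [MeasurableSpace E] [BorelSpace E] {μ : Measure E} [μ.IsAddHaarMeasure]

theorem integrableOn_ball_inv_norm (hE : 1 < finrank ℝ E) (r : ℝ) :
    IntegrableOn (fun x : E => ‖x‖⁻¹) (ball 0 r) μ :=
  integrableOn_ball_of_norm_le_rpow (C := 1) (α := 1) hE.le (by exact_mod_cast hE)
    (ae_of_all _ fun x => by simp [Real.rpow_neg_one]) measurable_norm.inv.aestronglyMeasurable

theorem integrableOn_ball_inv_dist (hE : 1 < finrank ℝ E) (v : E) (r : ℝ) :
    IntegrableOn (fun w => (dist w v)⁻¹) (ball v r) μ := by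
  rw [← preimage_sub_right_ball]
  simpa [dist_eq_norm, Function.comp_def] using
    ((measurePreserving_sub_right μ v).integrableOn_comp_preimage
      (measurableEmbedding_subRight v)).2 (integrableOn_ball_inv_norm hE r)

theorem tendsto_measure_ball_zero_nhdsGT_zero [Nontrivial E] :
    Tendsto (fun r => μ (ball (0 : E) r)) (𝓝[>] 0) (𝓝 0) := by
  have h : Tendsto (fun r : ℝ => ENNReal.ofReal (r ^ finrank ℝ E) * μ (ball 0 1))
      (𝓝[>] 0) (𝓝 0) := by
    have := ((ENNReal.continuous_ofReal.comp (continuous_pow (finrank ℝ E))).tendsto 0).mono_left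
      (nhdsWithin_le_nhds (s := Set.Ioi 0))
    simpa [zero_pow finrank_pos.ne'] using
      ENNReal.Tendsto.mul_const this (Or.inr measure_ball_lt_top.ne)
  refine h.congr' ?_
  filter_upwards [self_mem_nhdsWithin] with r hr
  exact (Measure.addHaar_ball_of_pos μ 0 hr).symm

theorem tendsto_setIntegral_ball_inv_norm (hE : 1 < finrank ℝ E) :
    Tendsto (fun r => ∫ x in ball (0 : E) r, ‖x‖⁻¹ ∂μ) (𝓝[>] 0) (𝓝 0) := by
  have : Nontrivial E := nontrivial_of_finrank_pos (R := ℝ) (by omega)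
  have hint := (integrableOn_ball_inv_norm (μ := μ) hE 1).tendsto_setIntegral_nhds_zero
    (s := fun r => ball (0 : E) r) (l := 𝓝[>] 0)
    (tendsto_of_tendsto_of_tendsto_of_le_of_le tendsto_const_nhds
      tendsto_measure_ball_zero_nhdsGT_zero (fun _ => zero_le)
      fun _ => Measure.restrict_apply_le _ _)
  refine hint.congr' ?_
  filter_upwards [Ioo_mem_nhdsGT (zero_lt_one' ℝ)] with r hr
  rw [Measure.restrict_restrict measurableSet_ball,
    Set.inter_eq_left.2 (ball_subset_ball hr.2.le)]

end InvNorm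

/-- `dist` on `ℝ × ℝ` is the sup distance; `dist3 z w` is the Euclidean distance in `ℝ³` from `z`
to the point `(w, 0)`. -/
noncomputable def dist3 (z : ℝ × ℝ × ℝ) (w : ℝ × ℝ) : ℝ :=
  √((z.1 - w.1) ^ 2 + (z.2.1 - w.2) ^ 2 + z.2.2 ^ 2)

theorem dist3_nonneg (z : ℝ × ℝ × ℝ) (w : ℝ × ℝ) : 0 ≤ dist3 z w :=
  Real.sqrt_nonneg _

@[fun_prop]
theorem Continuous.dist3 {α : Type*} [TopologicalSpace α] {g : α → ℝ × ℝ × ℝ} {h : α → ℝ × ℝ}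
    (hg : Continuous g) (hh : Continuous h) : Continuous fun x => dist3 (g x) (h x) := by
  unfold _root_.dist3
  fun_prop

theorem dist_le_dist3 (z : ℝ × ℝ × ℝ) (w : ℝ × ℝ) : dist w (z.1, z.2.1) ≤ dist3 z w := by
  rw [Prod.dist_eq, Real.dist_eq, Real.dist_eq, dist3]
  refine max_le (Real.le_sqrt_of_sq_le ?_) (Real.le_sqrt_of_sq_le ?_) <;>
    simp only [sq_abs] <;>
    nlinarith [sq_nonneg (z.2.1 - w.2), sq_nonneg z.2.2, sq_nonneg (z.1 - w.1)]

theorem dist3_le_two_mul_dist (p w : ℝ × ℝ) : dist3 (p.1, p.2, 0) w ≤ 2 * dist w p := by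
  rw [Prod.dist_eq, Real.dist_eq, Real.dist_eq, dist3]
  refine Real.sqrt_le_iff.2 ⟨by positivity, ?_⟩
  simp only [← sq_abs (p.1 - w.1), ← sq_abs (p.2 - w.2), abs_sub_comm p.1, abs_sub_comm p.2]
  nlinarith [le_max_left |w.1 - p.1| |w.2 - p.2|, le_max_right |w.1 - p.1| |w.2 - p.2|,
    abs_nonneg (w.1 - p.1), abs_nonneg (w.2 - p.2)]

theorem dist3_le_four_mul_dist3 {z : ℝ × ℝ × ℝ} {q w : ℝ × ℝ} {δ : ℝ}
    (hz : dist (z.1, z.2.1) q ≤ δ) (hw : 2 * δ < dist w q) :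
    dist3 (q.1, q.2, 0) w ≤ 4 * dist3 z w := by
  linarith [dist_triangle w (z.1, z.2.1) q, dist_le_dist3 z w, dist3_le_two_mul_dist q w]

section Potential

variable {f : ℝ × ℝ → ℝ}

theorem aestronglyMeasurable_div_dist3 {μ : Measure (ℝ × ℝ)} (hf : AEStronglyMeasurable f μ)
    (z : ℝ × ℝ × ℝ) : AEStronglyMeasurable (fun w => f w / dist3 z w) μ :=
  hf.div₀ (by fun_prop : Continuous fun w => dist3 z w).aestronglyMeasurable

theorem ae_norm_div_dist3_le {C : ℝ} (hfC : ∀ w, ‖f w‖ ≤ C) (z : ℝ × ℝ × ℝ) :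
    ∀ᵐ w, ‖f w / dist3 z w‖ ≤ C * (dist w (z.1, z.2.1))⁻¹ := by
  filter_upwards [compl_mem_ae_iff.2 (measure_singleton (z.1, z.2.1))] with w hw
  rw [norm_div, Real.norm_of_nonneg (dist3_nonneg z w), div_eq_mul_inv]
  exact mul_le_mul (hfC w) (inv_anti₀ (dist_pos.2 hw) (dist_le_dist3 z w))
    (inv_nonneg.2 (dist3_nonneg z w)) ((norm_nonneg _).trans (hfC w))

theorem integrableOn_ball_div_dist3 (hf : AEStronglyMeasurable f) {C : ℝ}
    (hfC : ∀ w, ‖f w‖ ≤ C) (z : ℝ × ℝ × ℝ) (r : ℝ) :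
    IntegrableOn (fun w => f w / dist3 z w) (ball (z.1, z.2.1) r) :=
  ((integrableOn_ball_inv_dist (by simp) _ r).const_mul C).mono'
    (aestronglyMeasurable_div_dist3 hf z).restrict (ae_restrict_of_ae (ae_norm_div_dist3_le hfC z))

theorem norm_setIntegral_div_dist3_le {C : ℝ}
    (hfC : ∀ w, ‖f w‖ ≤ C) (z : ℝ × ℝ × ℝ) {s : Set (ℝ × ℝ)} {r : ℝ}
    (hs : s ⊆ ball (z.1, z.2.1) r) :
    ‖∫ w in s, f w / dist3 z w‖ ≤ C * ∫ x in ball (0 : ℝ × ℝ) r, ‖x‖⁻¹ := by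
  have hC : 0 ≤ C := (norm_nonneg _).trans (hfC 0)
  have hint : IntegrableOn (fun w => C * (dist w (z.1, z.2.1))⁻¹) (ball (z.1, z.2.1) r) :=
    (integrableOn_ball_inv_dist (by simp) _ r).const_mul C
  calc ‖∫ w in s, f w / dist3 z w‖ ≤ ∫ w in s, C * (dist w (z.1, z.2.1))⁻¹ :=
        norm_integral_le_of_norm_le (hint.mono_set hs)
          (ae_restrict_of_ae (ae_norm_div_dist3_le hfC z))
    _ ≤ ∫ w in ball (z.1, z.2.1) r, C * (dist w (z.1, z.2.1))⁻¹ :=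
        setIntegral_mono_set hint (ae_of_all _ fun w => by positivity) hs.eventuallyLE
    _ = C * ∫ x in ball (0 : ℝ × ℝ) r, ‖x‖⁻¹ := by
        rw [integral_const_mul, setIntegral_ball_inv_dist]

theorem norm_div_dist3_le_four_mul {z : ℝ × ℝ × ℝ} {q w : ℝ × ℝ} {δ : ℝ}
    (hz : dist (z.1, z.2.1) q ≤ δ) (hw : 2 * δ < dist w q) :
    ‖f w / dist3 z w‖ ≤ 4 * ‖f w / dist3 (q.1, q.2, 0) w‖ := by
  have hq : 0 < dist3 (q.1, q.2, 0) w / 4 := by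
    linarith [dist_nonneg.trans hz, dist_le_dist3 (q.1, q.2, 0) w]
  rw [norm_div, norm_div, Real.norm_of_nonneg (dist3_nonneg _ _),
    Real.norm_of_nonneg (dist3_nonneg _ _)]
  calc ‖f w‖ / dist3 z w ≤ ‖f w‖ / (dist3 (q.1, q.2, 0) w / 4) :=
        div_le_div_of_nonneg_left (norm_nonneg _) hq (by linarith [dist3_le_four_mul_dist3 hz hw])
    _ = 4 * (‖f w‖ / dist3 (q.1, q.2, 0) w) := by field_simp

variable {q : ℝ × ℝ} {δ : ℝ}

theorem ae_restrict_compl_closedBall_norm_div_dist3_le {z : ℝ × ℝ × ℝ}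
    (hz : dist (z.1, z.2.1) q ≤ δ) :
    ∀ᵐ w ∂volume.restrict (closedBall q (2 * δ))ᶜ,
      ‖f w / dist3 z w‖ ≤ 4 * ‖f w / dist3 (q.1, q.2, 0) w‖ :=
  (ae_restrict_iff' measurableSet_closedBall.compl).2 <| ae_of_all _ fun _w hw =>
    norm_div_dist3_le_four_mul hz (not_le.1 hw)

theorem integrableOn_compl_closedBall_div_dist3 (hf : AEStronglyMeasurable f)
    (hq : Integrable fun w => f w / dist3 (q.1, q.2, 0) w) {z : ℝ × ℝ × ℝ}
    (hz : dist (z.1, z.2.1) q ≤ δ) :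
    IntegrableOn (fun w => f w / dist3 z w) (closedBall q (2 * δ))ᶜ :=
  (hq.norm.const_mul 4).restrict.mono' (aestronglyMeasurable_div_dist3 hf z).restrict
    (ae_restrict_compl_closedBall_norm_div_dist3_le hz)

theorem continuousAt_setIntegral_compl_closedBall_div_dist3 (hf : AEStronglyMeasurable f)
    (hq : Integrable fun w => f w / dist3 (q.1, q.2, 0) w) {z₀ : ℝ × ℝ × ℝ}
    (hz₀ : dist (z₀.1, z₀.2.1) q < δ) :
    ContinuousAt (fun z => ∫ w in (closedBall q (2 * δ))ᶜ, f w / dist3 z w) z₀ := by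
  have hnear : ∀ᶠ z in 𝓝 z₀, dist (z.1, z.2.1) q < δ :=
    (by fun_prop : Continuous fun z : ℝ × ℝ × ℝ => dist (z.1, z.2.1) q).continuousAt
      |>.eventually_lt_const hz₀
  refine continuousAt_of_dominated (bound := fun w => 4 * ‖f w / dist3 (q.1, q.2, 0) w‖)
    (.of_forall fun z => (aestronglyMeasurable_div_dist3 hf z).restrict)
    (hnear.mono fun z hz => ae_restrict_compl_closedBall_norm_div_dist3_le hz.le)
    (hq.norm.const_mul 4).restrict
    ((ae_restrict_iff' measurableSet_closedBall.compl).2 <| ae_of_all _ fun w hw => ?_)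
  have hw : 2 * δ < dist w q := not_le.1 hw
  have hpos : 0 < dist3 z₀ w := by
    linarith [dist_triangle w (z₀.1, z₀.2.1) q, dist_le_dist3 z₀ w, dist_nonneg.trans_lt hz₀]
  exact continuousAt_const.div (by fun_prop : Continuous fun z => dist3 z w).continuousAt
    hpos.ne'

theorem continuous_integral_div_dist3 (hf : AEStronglyMeasurable f) {C : ℝ}
    (hfC : ∀ w, ‖f w‖ ≤ C)
    (hdense : Dense {q : ℝ × ℝ | Integrable fun w => f w / dist3 (q.1, q.2, 0) w}) :
    Continuous fun z => ∫ w, f w / dist3 z w := by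
  refine continuous_iff_continuousAt.2 fun z₀ =>
    Metric.continuousAt_of_locally_uniform_approx fun ε hε => ?_
  obtain ⟨r, hrε, hr⟩ : ∃ r, C * ∫ x in ball (0 : ℝ × ℝ) r, ‖x‖⁻¹ < ε ∧ 0 < r :=
    ((((tendsto_setIntegral_ball_inv_norm (by simp)).const_mul C).eventually_lt_const
      (by simpa using hε)).and self_mem_nhdsWithin).exists
  obtain ⟨q, hq, hz₀q⟩ := hdense.exists_dist_lt (z₀.1, z₀.2.1) (by positivity : 0 < r / 3)
  refine ⟨{z | dist (z.1, z.2.1) q < r / 3},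
    (isOpen_lt (by fun_prop) continuous_const).mem_nhds hz₀q, _,
    continuousAt_setIntegral_compl_closedBall_div_dist3 hf hq hz₀q,
    fun z (hz : dist (z.1, z.2.1) q < r / 3) => ?_⟩
  have hsub : closedBall q (2 * (r / 3)) ⊆ ball (z.1, z.2.1) r := fun w hw => mem_ball.2 <| by
    linarith [mem_closedBall.1 hw, dist_triangle w q (z.1, z.2.1), dist_comm q (z.1, z.2.1), hz]
  have hint : Integrable fun w => f w / dist3 z w := by
    simpa using ((integrableOn_ball_div_dist3 hf hfC z r).mono_set hsub).union
      (integrableOn_compl_closedBall_div_dist3 hf hq hz.le)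
  rw [← integral_add_compl measurableSet_closedBall hint, dist_eq_norm, add_sub_cancel_right]
  exact (norm_setIntegral_div_dist3_le hfC z hsub).trans_lt hrε

end Potential

/-- If the planar potential of `1_S` equals `π` a.e. on the plane, then the potential
`f(z) = ∫_{ℝ²} 1_S(w)/|z−w| dw`, for `z = (x, y, t) ∈ ℝ³` (the plane embedded as `{t = 0}`),
is continuous on ℝ³. -/
theorem potential_continuous
    (S : Set (ℝ × ℝ)) (hS : MeasurableSet S)
    (hplane : ∀ᵐ p : ℝ × ℝ,
      ∫ w : ℝ × ℝ, S.indicator (fun _ => (1 : ℝ)) w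
        / Real.sqrt ((p.1 - w.1) ^ 2 + (p.2 - w.2) ^ 2) = π) :
    Continuous (fun z : ℝ × ℝ × ℝ =>
      ∫ w : ℝ × ℝ, S.indicator (fun _ => (1 : ℝ)) w
        / Real.sqrt ((z.1 - w.1) ^ 2 + (z.2.1 - w.2) ^ 2 + z.2.2 ^ 2)) := by
  have hgood : ∀ᵐ p : ℝ × ℝ,
      Integrable fun w => S.indicator (fun _ => (1 : ℝ)) w / dist3 (p.1, p.2, 0) w := by
    filter_upwards [hplane] with p hp
    refine .of_integral_ne_zero ?_
    simp [dist3, hp]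
  exact continuous_integral_div_dist3 (measurable_const.indicator hS).aestronglyMeasurable
    (fun w => (norm_indicator_le_norm_self _ w).trans_eq norm_one) (Measure.dense_of_ae hgood)
end
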